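/- arXiv:2308.08690 — 9 statements merged into one kernel-verified Lean document; each statement's English description precedes it below -/
import Mathlib

section
/- Let S ⊆ L be a set of links. The following are equivalent: (i) every set C ⊆ V with C ∩ R ≠ ∅ and R ∖ C ≠ ∅ satisfies |δ_{E∪S}(C)| ≥ 3; (ii) for every dangerous ring-cut C there exist vertices a ∈ C and b ∈ V(H) ∖ C that are connected in the graph (V, S). (This is the cut formulation of: a solution S is feasible for the Steiner Ring Augmentation Problem if and only if all dangerous ring-cuts are covered by S.) -/
/-!
If `C` separates two terminals, the ring vertices inside and outside `C` are both nonempty, so at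
least two ring edges cross `C`; since links are not ring edges, `|δ_{E∪S}(C)| ≥ 3` fails exactly
when two ring edges and no link cross `C`. Then the ring vertices on the side of `C` avoiding the
root form a dangerous ring-cut, and a link path leaving it must cross `C`. Conversely, if no vertex
of a dangerous ring-cut `I` is linked to a ring vertex outside `I`, the set of vertices linked to
`I` is crossed by no link and by only the two ring edges leaving `I`.
-/

open scoped Classical

def ringEdges (n : ℕ) : Finset (Sym2 ℕ) :=
  ((Finset.range (n - 1)).image fun i => s(i, i + 1)) ∪ {s(n - 1, 0)}

def CrossesCut (C : Set ℕ) (e : Sym2 ℕ) : Prop :=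
  ∃ x y : ℕ, e = s(x, y) ∧ x ∈ C ∧ y ∉ C

def IsRingCut (n : ℕ) (C : Set ℕ) : Prop :=
  ∃ a b : ℕ, 1 ≤ a ∧ a ≤ b ∧ b ≤ n - 1 ∧ C = Set.Icc a b

def ConnectedIn (S : Finset (Sym2 ℕ)) (a b : ℕ) : Prop :=
  Relation.ReflTransGen (fun x y => s(x, y) ∈ S) a b

open Finset

lemma Nat.exists_not_and_succ {P : ℕ → Prop} {i j : ℕ} (hij : i ≤ j) (hi : ¬P i) (hj : P j) :
    ∃ k, i ≤ k ∧ k < j ∧ ¬P k ∧ P (k + 1) := by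
  induction j, hij using Nat.le_induction with
  | base => exact absurd hj hi
  | succ j hij ih =>
    by_cases hPj : P j
    · obtain ⟨k, hik, hkj, hk⟩ := ih hPj
      exact ⟨k, hik, by omega, hk⟩
    · exact ⟨j, hij, by omega, hPj, hj⟩

lemma Nat.add_one_mod_eq_or {k n : ℕ} (hk : k < n) :
    (k + 1) % n = k + 1 ∧ k + 1 < n ∨ (k + 1) % n = 0 ∧ k + 1 = n := by
  rcases Nat.lt_or_ge (k + 1) n with h | h
  · exact Or.inl ⟨Nat.mod_eq_of_lt h, h⟩
  · obtain rfl : k + 1 = n := by omega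
    exact Or.inr ⟨Nat.mod_self _, rfl⟩

section CrossesCut

variable {C : Set ℕ} {S : Finset (Sym2 ℕ)}

lemma crossesCut_mk_iff {u v : ℕ} : CrossesCut C s(u, v) ↔ ¬(u ∈ C ↔ v ∈ C) := by
  constructor
  · rintro ⟨x, y, he, hx, hy⟩
    rcases Sym2.eq_iff.1 he with ⟨rfl, rfl⟩ | ⟨rfl, rfl⟩ <;> tauto
  · intro h
    by_cases hu : u ∈ C
    · exact ⟨u, v, rfl, hu, by tauto⟩
    · exact ⟨v, u, Sym2.eq_swap, by tauto, hu⟩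

lemma crossesCut_compl {e : Sym2 ℕ} : CrossesCut Cᶜ e ↔ CrossesCut C e := by
  induction e using Sym2.ind with
  | h u v => simp only [crossesCut_mk_iff, Set.mem_compl_iff, not_iff_not]

lemma ConnectedIn.exists_crossesCut {x y : ℕ} (h : ConnectedIn S x y) (hx : x ∈ C) (hy : y ∉ C) :
    ∃ e ∈ S, CrossesCut C e := by
  induction h with
  | refl => exact absurd hx hy
  | @tail b c _ hbc ih =>
    by_cases hb : b ∈ C
    · exact ⟨s(b, c), hbc, b, c, rfl, hb, hy⟩
    · exact ih hb

end CrossesCut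

section ConnectedClosure

variable {S : Finset (Sym2 ℕ)} {A : Set ℕ}

def connectedClosure (S : Finset (Sym2 ℕ)) (A : Set ℕ) : Set ℕ :=
  {v | ∃ a ∈ A, ConnectedIn S a v}

lemma subset_connectedClosure : A ⊆ connectedClosure S A :=
  fun a ha => ⟨a, ha, .refl⟩

lemma not_crossesCut_connectedClosure {e : Sym2 ℕ} (he : e ∈ S) :
    ¬CrossesCut (connectedClosure S A) e := by
  rintro ⟨x, y, rfl, ⟨a, ha, hax⟩, hy⟩
  exact hy ⟨a, ha, hax.tail he⟩

lemma connectedClosure_subset {V : Set ℕ} (hA : A ⊆ V) (hS : ∀ e ∈ S, ∀ x ∈ e, x ∈ V) :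
    connectedClosure S A ⊆ V := by
  rintro v ⟨a, ha, hav⟩
  induction hav with
  | refl => exact hA ha
  | tail _ hxy _ => exact hS _ hxy _ (Sym2.mem_mk_right _ _)

end ConnectedClosure

section Ring

variable {n : ℕ} {C D : Set ℕ}

def ringEdge (n k : ℕ) : Sym2 ℕ := s(k, (k + 1) % n)

lemma ringEdges_eq_image (hn : 1 ≤ n) : ringEdges n = (range n).image (ringEdge n) := by
  obtain ⟨m, rfl⟩ : ∃ m, n = m + 1 := ⟨n - 1, by omega⟩
  rw [range_add_one, image_insert, ringEdges, Nat.add_sub_cancel, union_comm, ← insert_eq]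
  congr 1
  · simp [ringEdge]
  · refine image_congr fun k hk => ?_
    simp [ringEdge, Nat.mod_eq_of_lt (show k + 1 < m + 1 by simpa using hk)]

lemma ringEdge_injOn (hn : 3 ≤ n) : Set.InjOn (ringEdge n) (range n : Set ℕ) := by
  intro k hk l hl h
  simp only [coe_range, Set.mem_Iio] at hk hl
  have := Nat.add_one_mod_eq_or hk
  have := Nat.add_one_mod_eq_or hl
  rcases Sym2.eq_iff.1 h with ⟨h1, _⟩ | ⟨h1, h2⟩ <;> omega

noncomputable def ringBoundary (n : ℕ) (C : Set ℕ) : Finset ℕ :=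
  (range n).filter fun k => CrossesCut C (ringEdge n k)

lemma mem_ringBoundary {k : ℕ} :
    k ∈ ringBoundary n C ↔ k < n ∧ ¬(k ∈ C ↔ (k + 1) % n ∈ C) := by
  rw [ringBoundary, mem_filter, mem_range, ringEdge, crossesCut_mk_iff]

lemma mem_ringBoundary_of_add_one_lt {k : ℕ} (hk : k + 1 < n) :
    k ∈ ringBoundary n C ↔ ¬(k ∈ C ↔ k + 1 ∈ C) := by
  rw [mem_ringBoundary, Nat.mod_eq_of_lt hk]
  exact and_iff_right (by omega)

lemma ringBoundary_congr (h : ∀ x < n, x ∈ C ↔ x ∈ D) : ringBoundary n C = ringBoundary n D := by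
  ext k
  simp only [mem_ringBoundary]
  refine and_congr_right fun hk => ?_
  rw [h k hk, h _ (Nat.mod_lt _ (by omega))]

lemma ringBoundary_compl : ringBoundary n Cᶜ = ringBoundary n C := by
  simp only [ringBoundary, crossesCut_compl]

lemma IsRingCut.lt_of_mem (hC : IsRingCut n C) {x : ℕ} (hx : x ∈ C) : x < n := by
  obtain ⟨a, b, ha, -, hb, rfl⟩ := hC
  obtain ⟨hax, hxb⟩ := hx
  omega

lemma IsRingCut.card_ringBoundary (hC : IsRingCut n C) : (ringBoundary n C).card = 2 := by
  obtain ⟨a, b, ha, hab, hb, rfl⟩ := hC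
  have hboundary : ringBoundary n (Set.Icc a b) = {a - 1, b} := by
    ext k
    simp only [mem_ringBoundary, Set.mem_Icc, mem_insert, mem_singleton]
    constructor
    · rintro ⟨hk, hcross⟩
      have := Nat.add_one_mod_eq_or hk
      omega
    · intro hk
      have hk' : k < n := by omega
      have := Nat.add_one_mod_eq_or hk'
      exact ⟨hk', by omega⟩
  rw [hboundary, card_pair (by omega)]

lemma exists_isRingCut_of_card_ringBoundary_le_two {t : ℕ} (h0 : 0 ∉ D) (ht : t ∈ D)
    (htn : t < n) (hD : (ringBoundary n D).card ≤ 2) :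
    ∃ I, IsRingCut n I ∧ ∀ x < n, x ∈ D ↔ x ∈ I := by
  have hex : ∃ x, x ∈ D := ⟨t, ht⟩
  set c := Nat.find hex
  set d := Nat.findGreatest (· ∈ D) (n - 1)
  have hc : c ∈ D := Nat.find_spec hex
  have hct : c ≤ t := Nat.find_min' hex ht
  have hc0 : c ≠ 0 := fun h => h0 (h ▸ hc)
  have htd : t ≤ d := Nat.le_findGreatest (by omega) ht
  have hdn : d ≤ n - 1 := Nat.findGreatest_le _
  have hd : d ∈ D := Nat.findGreatest_spec (P := (· ∈ D)) (show t ≤ n - 1 by omega) ht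
  have hc_boundary : c - 1 ∈ ringBoundary n D := by
    rw [mem_ringBoundary_of_add_one_lt (by omega), Nat.sub_add_cancel (by omega)]
    exact fun h => Nat.find_min hex (show c - 1 < c by omega) (h.2 hc)
  have hd_boundary : d ∈ ringBoundary n D := by
    refine mem_ringBoundary.2 ⟨by omega, fun h => ?_⟩
    have hd1 := h.1 hd
    rcases Nat.add_one_mod_eq_or (show d < n by omega) with ⟨hmod, hlt⟩ | ⟨hmod, -⟩ <;>
      rw [hmod] at hd1
    · exact Nat.findGreatest_is_greatest (P := (· ∈ D)) (Nat.lt_succ_self d) (by omega) hd1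
    · exact h0 hd1
  refine ⟨Set.Icc c d, ⟨c, d, by omega, by omega, hdn, rfl⟩, fun x hx => ⟨fun hxD =>
    ⟨Nat.find_min' hex hxD, Nat.le_findGreatest (by omega) hxD⟩, fun hxI => ?_⟩⟩
  by_contra hxD
  obtain ⟨k, hxk, hkd, hk, hk1⟩ := Nat.exists_not_and_succ (P := (· ∈ D)) hxI.2 hxD hd
  have hk_boundary : k ∈ ringBoundary n D :=
    (mem_ringBoundary_of_add_one_lt (by omega)).2 fun h => hk (h.2 hk1)
  have := two_lt_card_iff.2 ⟨c - 1, k, d, hc_boundary, hk_boundary, hd_boundary,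
    by have := hxI.1; omega, by omega, by omega⟩
  omega

lemma card_filter_crossesCut (hn : 3 ≤ n) {S : Finset (Sym2 ℕ)} (hS : Disjoint (ringEdges n) S) :
    ((ringEdges n ∪ S).filter (CrossesCut C)).card =
      (ringBoundary n C).card + (S.filter (CrossesCut C)).card := by
  rw [filter_union, card_union_of_disjoint (disjoint_filter_filter hS),
    ringEdges_eq_image (by omega), filter_image, card_image_of_injOn ((ringEdge_injOn hn).mono (coe_subset.2 (filter_subset _ _)))]
  rfl

end Ring

section Feasibility

variable {n : ℕ} {V R : Finset ℕ} {S : Finset (Sym2 ℕ)}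

def IsFeasibleAugmentation (n : ℕ) (V R : Finset ℕ) (S : Finset (Sym2 ℕ)) : Prop :=
  ∀ C : Set ℕ, C ⊆ ↑V → (C ∩ ↑R).Nonempty → ((↑R : Set ℕ) \ C).Nonempty →
    3 ≤ ((ringEdges n ∪ S).filter fun e => CrossesCut C e).card

def CoversDangerousRingCuts (n : ℕ) (R : Finset ℕ) (S : Finset (Sym2 ℕ)) : Prop :=
  ∀ C : Set ℕ, IsRingCut n C → (C ∩ ↑R).Nonempty →
    ∃ a ∈ C, ∃ b : ℕ, b < n ∧ b ∉ C ∧ ConnectedIn S a b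

lemma CoversDangerousRingCuts.of_isFeasibleAugmentation (hn : 3 ≤ n) (hV : range n ⊆ V)
    (hr : 0 ∈ R) (hSV : ∀ e ∈ S, ∀ x ∈ e, x ∈ V) (hES : Disjoint (ringEdges n) S)
    (h : IsFeasibleAugmentation n V R S) : CoversDangerousRingCuts n R S := by
  intro I hI ⟨t, htI, htR⟩
  by_contra hno
  push Not at hno
  set D := connectedClosure S I
  have hDI : ∀ x < n, x ∈ D ↔ x ∈ I := fun x hx =>
    ⟨fun ⟨a, ha, hax⟩ => by_contra fun hxI => hno a ha x hx hxI hax,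
      fun hxI => subset_connectedClosure hxI⟩
  have hDV : D ⊆ ↑V := connectedClosure_subset
    (fun x hx => hV (mem_range.2 (hI.lt_of_mem hx))) hSV
  have h0 : 0 ∉ D := fun h0D => by
    obtain ⟨a, b, ha, -, -, rfl⟩ := hI
    exact absurd ((hDI 0 (by omega)).1 h0D).1 (by omega)
  have hcard := h D hDV ⟨t, subset_connectedClosure htI, htR⟩ ⟨0, hr, h0⟩
  rw [card_filter_crossesCut hn hES, ringBoundary_congr hDI, hI.card_ringBoundary,
    filter_false_of_mem fun e he => not_crossesCut_connectedClosure he] at hcard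
  simp at hcard

lemma three_le_card_filter_crossesCut (hn : 3 ≤ n) (hES : Disjoint (ringEdges n) S)
    (h : CoversDangerousRingCuts n R S) {D : Set ℕ} (h0 : 0 ∉ D) {t : ℕ} (ht : t ∈ D)
    (htn : t < n) (htR : t ∈ R) : 3 ≤ ((ringEdges n ∪ S).filter (CrossesCut D)).card := by
  by_contra hlt
  rw [card_filter_crossesCut hn hES] at hlt
  obtain ⟨I, hI, hDI⟩ := exists_isRingCut_of_card_ringBoundary_le_two h0 ht htn (by omega)
  obtain ⟨x, hxI, y, hyn, hyI, hxy⟩ := h I hI ⟨t, (hDI t htn).1 ht, htR⟩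
  obtain ⟨e, heS, he⟩ :=
    hxy.exists_crossesCut ((hDI x (hI.lt_of_mem hxI)).2 hxI) fun hy => hyI ((hDI y hyn).1 hy)
  have : 0 < (S.filter (CrossesCut D)).card := card_pos.2 ⟨e, mem_filter.2 ⟨heS, he⟩⟩
  rw [ringBoundary_congr hDI, hI.card_ringBoundary] at hlt
  omega

lemma CoversDangerousRingCuts.isFeasibleAugmentation (hn : 3 ≤ n) (hR : R ⊆ range n)
    (hES : Disjoint (ringEdges n) S) (h : CoversDangerousRingCuts n R S) :
    IsFeasibleAugmentation n V R S := by
  intro C _ ⟨u, huC, huR⟩ ⟨w, hwR, hwC⟩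
  by_cases h0 : 0 ∈ C
  · have := three_le_card_filter_crossesCut hn hES h (D := Cᶜ) (not_not.2 h0) hwC
      (mem_range.1 (hR hwR)) hwR
    simpa only [crossesCut_compl] using this
  · exact three_le_card_filter_crossesCut hn hES h h0 huC (mem_range.1 (hR huR)) huR

end Feasibility

/-- A solution `S ⊆ L` is feasible for SRAP (all cuts separating terminals have at least
3 edges of `E ∪ S` crossing them) iff every dangerous ring-cut `C` has a vertex `a ∈ C`
and a vertex `b ∈ V(H) ∖ C` connected in `(V, S)`. -/
theorem stmt0 (n : ℕ) (hn : 3 ≤ n) (V : Finset ℕ) (hV : Finset.range n ⊆ V)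
    (R : Finset ℕ) (hR : R ⊆ Finset.range n) (hr : 0 ∈ R)
    (L : Finset (Sym2 ℕ)) (hL : ∀ e ∈ L, ¬e.IsDiag ∧ ∀ x ∈ e, x ∈ V)
    (hEL : Disjoint (ringEdges n) L)
    (S : Finset (Sym2 ℕ)) (hS : S ⊆ L) :
    (∀ C : Set ℕ, C ⊆ ↑V → (C ∩ ↑R).Nonempty → ((↑R : Set ℕ) \ C).Nonempty →
      3 ≤ ((ringEdges n ∪ S).filter fun e => CrossesCut C e).card) ↔
    (∀ C : Set ℕ, IsRingCut n C → (C ∩ ↑R).Nonempty →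
      ∃ a ∈ C, ∃ b : ℕ, b < n ∧ b ∉ C ∧ ConnectedIn S a b) := by
  have hES : Disjoint (ringEdges n) S := hEL.mono_right hS
  exact ⟨CoversDangerousRingCuts.of_isFeasibleAugmentation hn hV hr
      (fun e he => (hL e (hS he)).2) hES,
    CoversDangerousRingCuts.isFeasibleAugmentation hn hR hES⟩
end

section
/- Let R ⊆ V(H) be a terminal set and 𝒮 a finite set of hyper-links. Then every dangerous ring-cut is covered by some hyper-link of 𝒮 if and only if for every terminal r′ ∈ R ∖ {r} there is a path from r to r′ in the hyper-link intersection graph Γ(𝒮). -/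
/-- A hyper-link `ℓ` covers a ring-cut `C` if `ℓ ∩ C ≠ ∅` and `ℓ ∖ C ≠ ∅`. -/
def Covers (ℓ : Finset ℕ) (C : Set ℕ) : Prop :=
  (∃ x ∈ ℓ, x ∈ C) ∧ (∃ x ∈ ℓ, x ∉ C)

/-- Two hyper-links are intersecting if they share a vertex, or each has a vertex strictly
between two vertices of the other. -/
def Intersecting (ℓ ℓ' : Finset ℕ) : Prop :=
  (ℓ ∩ ℓ').Nonempty ∨
    ((∃ x ∈ ℓ, ∃ y₁ ∈ ℓ', ∃ y₂ ∈ ℓ', y₁ < x ∧ x < y₂) ∧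
      (∃ y ∈ ℓ', ∃ x₁ ∈ ℓ, ∃ x₂ ∈ ℓ, x₁ < y ∧ y < x₂))

/-- There is a path from `u` to `v` in the hyper-link intersection graph `Γ(K)`:
a path from some hyper-link of `K` containing `u` to some hyper-link of `K` containing `v`. -/
def GammaPath (K : Finset (Finset ℕ)) (u v : ℕ) : Prop :=
  ∃ ℓ₁ ∈ K, ∃ ℓ₂ ∈ K, u ∈ ℓ₁ ∧ v ∈ ℓ₂ ∧
    Relation.ReflTransGen (fun a b => a ∈ K ∧ b ∈ K ∧ Intersecting a b) ℓ₁ ℓ₂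

def LinkAdj (K : Finset (Finset ℕ)) (a b : Finset ℕ) : Prop :=
  a ∈ K ∧ b ∈ K ∧ Intersecting a b

def RootReachable (K : Finset (Finset ℕ)) (m : Finset ℕ) : Prop :=
  ∃ ℓ₀ ∈ K, 0 ∈ ℓ₀ ∧ Relation.ReflTransGen (LinkAdj K) ℓ₀ m

def reachedVertices (K : Finset (Finset ℕ)) : Set ℕ :=
  insert 0 {v | ∃ m, RootReachable K m ∧ v ∈ m}

lemma IsRingCut.ordConnected {n : ℕ} {C : Set ℕ} (hC : IsRingCut n C) : C.OrdConnected := by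
  obtain ⟨a, b, -, -, -, rfl⟩ := hC
  exact Set.ordConnected_Icc

lemma IsRingCut.zero_notMem {n : ℕ} {C : Set ℕ} (hC : IsRingCut n C) : 0 ∉ C := by
  obtain ⟨a, b, ha, -, -, rfl⟩ := hC
  simp only [Set.mem_Icc, not_and]
  omega

lemma Intersecting.exists_mem_of_forall_mem {ℓ ℓ' : Finset ℕ} {I : Set ℕ} (hI : I.OrdConnected)
    (h : Intersecting ℓ ℓ') (h' : ∀ y ∈ ℓ', y ∈ I) : ∃ x ∈ ℓ, x ∈ I := by
  rcases h with ⟨v, hv⟩ | ⟨⟨x, hx, y₁, hy₁, y₂, hy₂, h₁, h₂⟩, -⟩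
  · rw [Finset.mem_inter] at hv
    exact ⟨v, hv.1, h' v hv.2⟩
  · exact ⟨x, hx, hI.out (h' y₁ hy₁) (h' y₂ hy₂) ⟨h₁.le, h₂.le⟩⟩

lemma intersecting_of_crossing {m ℓ : Finset ℕ} {y x q z : ℕ} (hy : y ∈ ℓ) (hx : x ∈ ℓ)
    (hq : q ∈ m) (hz : z ∈ m) (hyq : y < q) (hqx : q < x) (hzyx : z < y ∨ x < z) :
    Intersecting m ℓ := by
  refine Or.inr ⟨⟨q, hq, y, hy, x, hx, hyq, hqx⟩, ?_⟩
  rcases hzyx with h | h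
  · exact ⟨y, hy, z, hz, q, hq, h, hyq⟩
  · exact ⟨x, hx, q, hq, z, hz, hqx, h⟩

namespace RootReachable

variable {K : Finset (Finset ℕ)} {ℓ m : Finset ℕ}

lemma mem (h : RootReachable K m) : m ∈ K := by
  obtain ⟨ℓ₀, hℓ₀, -, hpath⟩ := h
  rcases hpath.cases_tail with rfl | ⟨_, -, -, hm, -⟩
  exacts [hℓ₀, hm]

lemma of_intersecting (h : RootReachable K m) (hℓ : ℓ ∈ K) (hmℓ : Intersecting m ℓ) :
    RootReachable K ℓ :=
  let ⟨ℓ₀, hℓ₀, h0, hpath⟩ := h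
  ⟨ℓ₀, hℓ₀, h0, hpath.tail ⟨h.mem, hℓ, hmℓ⟩⟩

lemma of_mem_reachedVertices (hℓ : ℓ ∈ K) {s : ℕ} (hs : s ∈ ℓ)
    (hsS : s ∈ reachedVertices K) : RootReachable K ℓ := by
  rcases hsS with rfl | ⟨m, hm, hsm⟩
  · exact ⟨ℓ, hℓ, hs, .refl⟩
  · exact hm.of_intersecting hℓ (Or.inl ⟨s, Finset.mem_inter.mpr ⟨hsm, hs⟩⟩)

lemma exists_covers_of_mem {I : Set ℕ} (hI : I.OrdConnected) (h0 : 0 ∉ I)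
    (hm : RootReachable K m) {t : ℕ} (ht : t ∈ m) (htI : t ∈ I) :
    ∃ m', RootReachable K m' ∧ Covers m' I := by
  by_contra! hcov
  -- No reachable hyper-link straddles `I` now, so having a vertex outside the interval `I`
  -- propagates along Γ(K) from the root's hyper-link.
  suffices ∀ m, RootReachable K m → ∃ z ∈ m, z ∉ I from hcov m hm ⟨⟨t, ht, htI⟩, this m hm⟩
  rintro m ⟨ℓ₀, hℓ₀, h0ℓ₀, hpath⟩
  induction hpath with
  | refl => exact ⟨0, h0ℓ₀, h0⟩
  | tail hpath hbc ih =>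
    by_contra! hc
    obtain ⟨x, hx, hxI⟩ := hbc.2.2.exists_mem_of_forall_mem hI hc
    exact hcov _ ⟨ℓ₀, hℓ₀, h0ℓ₀, hpath⟩ ⟨⟨x, hx, hxI⟩, ih⟩

lemma of_le_of_le (hℓ : ℓ ∈ K) {y x s : ℕ} (hy : y ∈ ℓ) (hx : x ∈ ℓ)
    (hs : s ∈ reachedVertices K) (hys : y ≤ s) (hsx : s ≤ x) : RootReachable K ℓ := by
  by_contra hℓr
  have hℓS : ∀ z ∈ ℓ, z ∉ reachedVertices K := fun z hz hzS =>
    hℓr (of_mem_reachedVertices hℓ hz hzS)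
  have hys : y < s := lt_of_le_of_ne hys fun h => hℓS y hy (h ▸ hs)
  have hsx : s < x := lt_of_le_of_ne hsx fun h => hℓS x hx (h ▸ hs)
  obtain ⟨m, hm, hsm⟩ : ∃ m, RootReachable K m ∧ s ∈ m := hs.resolve_left (by omega)
  obtain ⟨m', hm', ⟨q, hq, hqI⟩, ⟨z, hz, hzI⟩⟩ :=
    exists_covers_of_mem Set.ordConnected_Ioo (by simp) hm hsm ⟨hys, hsx⟩
  have hzS : z ∈ reachedVertices K := Or.inr ⟨m', hm', hz⟩
  have hzy : z ≠ y := fun h => hℓS y hy (h ▸ hzS)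
  have hzx : z ≠ x := fun h => hℓS x hx (h ▸ hzS)
  have hzyx : z < y ∨ x < z := by
    simp only [Set.mem_Ioo, not_and_or, not_lt] at hzI
    omega
  exact hℓr (hm'.of_intersecting hℓ (intersecting_of_crossing hy hx hq hz hqI.1 hqI.2 hzyx))

end RootReachable

lemma gammaPath_zero_iff {K : Finset (Finset ℕ)} {v : ℕ} :
    GammaPath K 0 v ↔ ∃ m, RootReachable K m ∧ v ∈ m := by
  constructor
  · rintro ⟨ℓ₀, hℓ₀, m, -, h0, hv, hpath⟩
    exact ⟨m, ⟨ℓ₀, hℓ₀, h0, hpath⟩, hv⟩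
  · rintro ⟨m, hm, hv⟩
    obtain ⟨ℓ₀, hℓ₀, h0, hpath⟩ := id hm
    exact ⟨ℓ₀, hℓ₀, m, hm.mem, h0, hv, hpath⟩

lemma exists_lower_gap {S : Set ℕ} {r : ℕ} (h0 : 0 ∈ S) (hr : r ∉ S) :
    ∃ a, 1 ≤ a ∧ a ≤ r ∧ a - 1 ∈ S ∧ ∀ s ∈ S, s ≤ r → s < a := by
  classical
  have hg : Nat.findGreatest (· ∈ S) r ∈ S := Nat.findGreatest_spec (Nat.zero_le r) h0
  have hgr : Nat.findGreatest (· ∈ S) r ≠ r := fun h => hr (h ▸ hg)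
  have := Nat.findGreatest_le (P := (· ∈ S)) r
  exact ⟨Nat.findGreatest (· ∈ S) r + 1, by omega, by omega, by simpa using hg,
    fun s hs hsr => Nat.lt_succ_of_le (Nat.le_findGreatest hsr hs)⟩

lemma exists_upper_gap {S : Set ℕ} {r N : ℕ} (hr : r ∉ S) (hrN : r ≤ N) :
    ∃ b, r ≤ b ∧ b ≤ N ∧ (b < N → b + 1 ∈ S) ∧ ∀ s ∈ S, r ≤ s → b < s := by
  classical
  have hex : ∃ c, r < c ∧ (c ∈ S ∨ c = N + 1) := ⟨N + 1, by omega, Or.inr rfl⟩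
  have hc := Nat.find_spec hex
  have hcN : Nat.find hex ≤ N + 1 := Nat.find_min' hex ⟨by omega, Or.inr rfl⟩
  refine ⟨Nat.find hex - 1, by omega, by omega, fun hb => ?_, fun s hs hrs => ?_⟩
  · rw [Nat.sub_add_cancel (by omega)]
    exact hc.2.resolve_right (by omega)
  · have hrs' : r < s := lt_of_le_of_ne hrs fun h => hr (h ▸ hs)
    have := Nat.find_min' hex ⟨hrs', Or.inl hs⟩
    omega

lemma gammaPath_of_forall_covers {n : ℕ} {K : Finset (Finset ℕ)}
    (hK : ∀ ℓ ∈ K, ℓ ⊆ Finset.range n) {r : ℕ} (hr0 : r ≠ 0) (hrn : r < n)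
    (hcov : ∀ C, IsRingCut n C → r ∈ C → ∃ ℓ ∈ K, Covers ℓ C) : GammaPath K 0 r := by
  by_contra hpath
  have hr : r ∉ reachedVertices K := by
    rintro (h | h)
    exacts [hr0 h, hpath (gammaPath_zero_iff.2 h)]
  obtain ⟨a, ha1, har, haS, ha⟩ := exists_lower_gap (Set.mem_insert _ _) hr
  obtain ⟨b, hrb, hbn, hbS, hb⟩ := exists_upper_gap (N := n - 1) hr (by omega)
  obtain ⟨ℓ, hℓ, ⟨x, hx, hxC⟩, ⟨y, hy, hyC⟩⟩ :=
    hcov _ ⟨a, b, ha1, har.trans hrb, hbn, rfl⟩ ⟨har, hrb⟩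
  have hyn : y < n := Finset.mem_range.1 (hK ℓ hℓ hy)
  simp only [Set.mem_Icc, not_and_or, not_le] at hxC hyC
  have hℓr : RootReachable K ℓ := by
    rcases hyC with hya | hby
    · exact .of_le_of_le hℓ hy hx haS (by omega) (by omega)
    · exact .of_le_of_le hℓ hx hy (hbS (by omega)) (by omega) (by omega)
  have hxS : x ∈ reachedVertices K := Or.inr ⟨ℓ, hℓr, hx⟩
  rcases le_total x r with hxr | hrx
  · exact absurd (ha x hxS hxr) (by omega)
  · exact absurd (hb x hxS hrx) (by omega)

lemma covers_of_gammaPath {K : Finset (Finset ℕ)} {I : Set ℕ} (hI : I.OrdConnected)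
    (h0 : 0 ∉ I) {t : ℕ} (htI : t ∈ I) (ht : GammaPath K 0 t) : ∃ ℓ ∈ K, Covers ℓ I := by
  obtain ⟨m, hm, htm⟩ := gammaPath_zero_iff.1 ht
  obtain ⟨m', hm', hcov⟩ := hm.exists_covers_of_mem hI h0 htm htI
  exact ⟨m', hm'.mem, hcov⟩

theorem stmt1_general (n : ℕ) (R : Finset ℕ) (hR : R ⊆ Finset.range n)
    (𝒮 : Finset (Finset ℕ)) (h𝒮 : ∀ ℓ ∈ 𝒮, ℓ ⊆ Finset.range n ∧ 2 ≤ ℓ.card) :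
    (∀ C : Set ℕ, IsRingCut n C → (C ∩ ↑R).Nonempty → ∃ ℓ ∈ 𝒮, Covers ℓ C) ↔
      ∀ r' ∈ R, r' ≠ 0 → GammaPath 𝒮 0 r' := by
  constructor
  · intro hcov r' hr'R hr'0
    exact gammaPath_of_forall_covers (fun ℓ hℓ => (h𝒮 ℓ hℓ).1) hr'0
      (Finset.mem_range.1 (hR hr'R)) fun C hC hr'C => hcov C hC ⟨r', hr'C, hr'R⟩
  · rintro hpath C hC ⟨t, htC, htR⟩
    exact covers_of_gammaPath hC.ordConnected hC.zero_notMem htC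
      (hpath t htR fun h => hC.zero_notMem (h ▸ htC))

/-- Every dangerous ring-cut is covered by some hyper-link of `𝒮` iff every terminal
`r' ∈ R ∖ {r}` is connected to the root `r = 0` in the hyper-link intersection graph `Γ(𝒮)`. -/
theorem stmt1 (n : ℕ) (hn : 3 ≤ n) (R : Finset ℕ) (hR : R ⊆ Finset.range n) (hr : 0 ∈ R)
    (𝒮 : Finset (Finset ℕ)) (h𝒮 : ∀ ℓ ∈ 𝒮, ℓ ⊆ Finset.range n ∧ 2 ≤ ℓ.card) :
    (∀ C : Set ℕ, IsRingCut n C → (C ∩ ↑R).Nonempty → ∃ ℓ ∈ 𝒮, Covers ℓ C) ↔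
      ∀ r' ∈ R, r' ≠ 0 → GammaPath 𝒮 0 r' :=
  stmt1_general n R hR 𝒮 h𝒮
end

section
/- Let F be a feasible R-special directed solution. Then for every v ∈ R there exists an interval I = {a,…,b} ⊆ V(H) such that the set of descendants of v in the arborescence (R,F) equals R ∩ I. -/
/-- `Reach F u v`: there is a directed path of links of `F` from `u` to `v`. -/
def Reach (F : Finset (ℕ × ℕ)) (u v : ℕ) : Prop :=
  Relation.ReflTransGen (fun a b => (a, b) ∈ F) u v

/-- A directed link `(u,v)` enters a cut `C` if `v ∈ C` and `u ∉ C`. -/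
def Enters (f : ℕ × ℕ) (C : Set ℕ) : Prop := f.2 ∈ C ∧ f.1 ∉ C

/-- Two directed links cross if their intervals `[a,b]`, `[c,d]` satisfy
`a < c < b < d` or `c < a < d < b`. -/
def Crosses (f g : ℕ × ℕ) : Prop :=
  (min f.1 f.2 < min g.1 g.2 ∧ min g.1 g.2 < max f.1 f.2 ∧ max f.1 f.2 < max g.1 g.2) ∨
    (min g.1 g.2 < min f.1 f.2 ∧ min f.1 f.2 < max g.1 g.2 ∧ max g.1 g.2 < max f.1 f.2)

/-- `F` is an `R`-special directed solution (with root `r = 0`):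
(1) the endpoints of every link are distinct and lie in `R`;
(2) `(R, F)` is an `r`-out arborescence;
(3) no two links of `F` cross;
(4) no two links of `F` leaving the same vertex go in the same direction. -/
def RSpecial (R : Finset ℕ) (F : Finset (ℕ × ℕ)) : Prop :=
  (∀ f ∈ F, f.1 ≠ f.2 ∧ f.1 ∈ R ∧ f.2 ∈ R) ∧
    (∀ f ∈ F, f.2 ≠ 0) ∧
    (∀ v ∈ R, v ≠ 0 → ∃! f : ℕ × ℕ, f ∈ F ∧ f.2 = v) ∧
    (∀ v ∈ R, Reach F 0 v) ∧
    (∀ f ∈ F, ∀ g ∈ F, f ≠ g → ¬Crosses f g) ∧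
    (∀ f ∈ F, ∀ g ∈ F, f ≠ g → f.1 = g.1 →
      ¬((f.1 < f.2 ∧ g.1 < g.2) ∨ (f.2 < f.1 ∧ g.2 < g.1)))

/-- `F` is feasible: every dangerous ring-cut is entered by some link of `F`. -/
def FeasibleDir (n : ℕ) (R : Finset ℕ) (F : Finset (ℕ × ℕ)) : Prop :=
  ∀ C : Set ℕ, IsRingCut n C → (C ∩ ↑R).Nonempty → ∃ f ∈ F, Enters f C

/-- A link `f = (u,v) ∈ F` is responsible for a cut `C` if it enters `C` and no link on the
unique directed path in `(R,F)` from the root to `u` (i.e. no link of `F` whose head is an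
ancestor of `u`) enters `C`. -/
def Responsible (F : Finset (ℕ × ℕ)) (f : ℕ × ℕ) (C : Set ℕ) : Prop :=
  f ∈ F ∧ Enters f C ∧ ∀ g ∈ F, Reach F g.2 f.1 → ¬Enters g C

/-- `[a, b]` is the `v`-bad interval `I_v`: the maximal interval of `V(H)` containing `v`
that contains no terminal which is not a descendant of `v`. -/
def IsBadInterval (n : ℕ) (R : Finset ℕ) (F : Finset (ℕ × ℕ)) (v a b : ℕ) : Prop :=
  a ≤ v ∧ v ≤ b ∧ b ≤ n - 1 ∧ (∀ w ∈ R, a ≤ w → w ≤ b → Reach F v w) ∧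
    ∀ a' b' : ℕ, a' ≤ a → b ≤ b' → b' ≤ n - 1 →
      (∀ w ∈ R, a' ≤ w → w ≤ b' → Reach F v w) → a' = a ∧ b' = b

/-!
Descendant sets are order-convex within the terminals. Take terminals `u ≤ w ≤ u'` with `u, u'`
descendants of `v`, and induct along the root path of `w`. If `w` is not on the path from `v`
to `u` or to `u'`, some link `(x, y)` of that path jumps over `w`. The link `(p, w)` into `w`
cannot cross it, so the parent `p` lies between `min x y` and `max x y`, both descendants of `v`;
by induction `p`, hence `w`, is a descendant of `v`. The descendants of `v` are then exactly the
terminals between the smallest and the largest of them.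
-/

section

variable {F : Finset (ℕ × ℕ)}

lemma Reach.reach_or_exists_link_straddling {v b : ℕ} (h : Reach F v b) {w : ℕ}
    (hw : (v < w ∧ w < b) ∨ (b < w ∧ w < v)) :
    Reach F v w ∨ ∃ x y, (x, y) ∈ F ∧ Reach F v x ∧ min x y < w ∧ w < max x y := by
  induction h with
  | refl => omega
  | @tail c d hvc hcd ih =>
    by_cases hcw : c = w
    · exact Or.inl (hcw ▸ hvc)
    by_cases hstr : min c d < w ∧ w < max c d
    · exact Or.inr ⟨c, d, hcd, hvc, hstr⟩
    · exact ih (by omega)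

lemma Reach.min_max_of_mem {v x y : ℕ} (hvx : Reach F v x) (hxy : (x, y) ∈ F) :
    Reach F v (min x y) ∧ Reach F v (max x y) := by
  have hvy : Reach F v y := hvx.tail hxy
  rcases le_total x y with h | h
  · rw [min_eq_left h, max_eq_right h]; exact ⟨hvx, hvy⟩
  · rw [min_eq_right h, max_eq_left h]; exact ⟨hvy, hvx⟩

lemma mem_Icc_of_not_crosses {p w x y : ℕ} (hnc : ¬Crosses (p, w) (x, y))
    (hm : min x y < w) (hM : w < max x y) : min x y ≤ p ∧ p ≤ max x y := by
  simp only [Crosses, not_or] at hnc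
  omega

lemma reach_of_le_of_le
    (hnc : ∀ f ∈ F, ∀ g ∈ F, f ≠ g → ¬Crosses f g) {w : ℕ} (hw : Reach F 0 w)
    {v u u' : ℕ} (hu : Reach F v u) (hu' : Reach F v u') (huw : u ≤ w) (hwu' : w ≤ u') :
    Reach F v w := by
  induction hw generalizing v u u' with
  | refl => exact Nat.le_zero.mp huw ▸ hu
  | @tail p w _ hpw ih =>
    obtain rfl | huw := huw.eq_or_lt
    · exact hu
    obtain rfl | hwu' := hwu'.eq_or_lt
    · exact hu'
    have hstraddle : Reach F v w ∨
        ∃ x y, (x, y) ∈ F ∧ Reach F v x ∧ min x y < w ∧ w < max x y := by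
      obtain hvw | rfl | hwv := lt_trichotomy v w
      · exact hu'.reach_or_exists_link_straddling (Or.inl ⟨hvw, hwu'⟩)
      · exact Or.inl .refl
      · exact hu.reach_or_exists_link_straddling (Or.inr ⟨huw, hwv⟩)
    obtain h | ⟨x, y, hxy, hvx, hm, hM⟩ := hstraddle
    · exact h
    by_cases hlink : (p, w) = (x, y)
    · obtain ⟨-, rfl⟩ := Prod.mk.inj hlink
      exact hvx.tail hxy
    obtain ⟨hmin, hmax⟩ := hvx.min_max_of_mem hxy
    obtain ⟨hp, hp'⟩ := mem_Icc_of_not_crosses (hnc _ hpw _ hxy hlink) hm hM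
    exact (ih hmin hmax hp hp').tail hpw

end

theorem stmt3_general (n : ℕ) (R : Finset ℕ) (hR : R ⊆ Finset.range n)
    (F : Finset (ℕ × ℕ)) (hsp : RSpecial R F) :
    ∀ v ∈ R, ∃ a b : ℕ, a ≤ b ∧ b ≤ n - 1 ∧
      {w : ℕ | w ∈ R ∧ Reach F v w} = ↑R ∩ Set.Icc a b := by
  classical
  intro v hv
  set D := R.filter (Reach F v)
  have hvD : v ∈ D := Finset.mem_filter.mpr ⟨hv, .refl⟩
  have hne : D.Nonempty := ⟨v, hvD⟩
  obtain ⟨-, hv_min⟩ := Finset.mem_filter.mp (D.min'_mem hne)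
  obtain ⟨hmaxR, hv_max⟩ := Finset.mem_filter.mp (D.max'_mem hne)
  refine ⟨D.min' hne, D.max' hne, D.min'_le_max' hne, ?_, ?_⟩
  · have := Finset.mem_range.mp (hR hmaxR)
    omega
  ext w
  constructor
  · rintro ⟨hwR, hvw⟩
    have hwD : w ∈ D := Finset.mem_filter.mpr ⟨hwR, hvw⟩
    exact ⟨hwR, D.min'_le w hwD, D.le_max' w hwD⟩
  · rintro ⟨hwR, hmin, hmax⟩
    exact ⟨hwR, reach_of_le_of_le hsp.2.2.2.2.1 (hsp.2.2.2.1 w hwR) hv_min hv_max hmin hmax⟩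

/-- For a feasible `R`-special directed solution, the set of descendants of any `v ∈ R`
is of the form `R ∩ I` for some ring interval `I = {a, …, b} ⊆ V(H)`. -/
theorem stmt3 (n : ℕ) (hn : 3 ≤ n) (R : Finset ℕ) (hR : R ⊆ Finset.range n) (hr : 0 ∈ R)
    (F : Finset (ℕ × ℕ)) (hsp : RSpecial R F) (hfeas : FeasibleDir n R F) :
    ∀ v ∈ R, ∃ a b : ℕ, a ≤ b ∧ b ≤ n - 1 ∧
      {w : ℕ | w ∈ R ∧ Reach F v w} = ↑R ∩ Set.Icc a b :=
  stmt3_general n R hR F hsp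
end

section
/- Let F be a feasible R-special directed solution. Then for every dangerous ring-cut C there is exactly one directed link in F that is responsible for C. -/
/-!
A link entering `C` whose head has the most descendants is responsible for `C`: the head of a
link on the root path of its tail would have strictly more descendants, the arborescence being
acyclic.

Uniqueness rests on one geometric fact: a vertex strictly inside the interval of a link `f` is
a descendant of `f.2`, because the root path has to enter that interval, and by the
non-crossing and direction conditions it can only do so from `f.2`. If two links were
responsible for `C = [a, b]` with tails on the same side of `C`, the tail nearer to `C` would
lie under the other link, hence below a link entering `C`. If the tails lie on opposite sides,
take a common ancestor `w` of them with fewest descendants. It lies outside `C`, say left of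
it, and the path from `w` to the right tail jumps over `C` by a link whose head is, by the
geometric fact, again a common ancestor, with fewer descendants.
-/

open Relation Set

def under (e : ℕ × ℕ) : Set ℕ := Ioo (min e.1 e.2) (max e.1 e.2)

@[simp]
lemma mem_under {e : ℕ × ℕ} {x : ℕ} : x ∈ under e ↔ min e.1 e.2 < x ∧ x < max e.1 e.2 :=
  Iff.rfl

open Classical in
noncomputable def descendants (R : Finset ℕ) (F : Finset (ℕ × ℕ)) (u : ℕ) : Finset ℕ :=
  R.filter (Reach F u ·)

lemma mem_descendants {R : Finset ℕ} {F : Finset (ℕ × ℕ)} {u x : ℕ} :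
    x ∈ descendants R F u ↔ x ∈ R ∧ Reach F u x := by
  classical
  exact Finset.mem_filter

lemma Reach.exists_enters {F : Finset (ℕ × ℕ)} {S : Set ℕ} {x y : ℕ} (h : Reach F x y)
    (hx : x ∉ S) (hy : y ∈ S) : ∃ e ∈ F, Enters e S ∧ Reach F x e.1 ∧ Reach F e.2 y := by
  induction h using ReflTransGen.head_induction_on with
  | refl => exact absurd hy hx
  | @head u v huv hvy ih =>
    by_cases hv : v ∈ S
    · exact ⟨(u, v), huv, ⟨hv, hx⟩, .refl, hvy⟩
    · obtain ⟨e, he, hent, hve, hey⟩ := ih hv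
      exact ⟨e, he, hent, .head huv hve, hey⟩

lemma Responsible.not_mem_of_reach {F : Finset (ℕ × ℕ)} {f : ℕ × ℕ} {C : Set ℕ} {x : ℕ}
    (hf : Responsible F f C) (h0 : 0 ∉ C) (hx : Reach F 0 x) (hxf : Reach F x f.1) :
    x ∉ C := fun hxC => by
  obtain ⟨e, he, hent, -, hex⟩ := hx.exists_enters h0 hxC
  exact hf.2.2 e he (ReflTransGen.trans hex hxf) hent

namespace RSpecial

variable {R : Finset ℕ} {F : Finset (ℕ × ℕ)} {C : Set ℕ} {e f g : ℕ × ℕ} {u v w x : ℕ}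

lemma tail_ne_head (hF : RSpecial R F) (he : e ∈ F) : e.1 ≠ e.2 := (hF.1 e he).1

lemma tail_mem (hF : RSpecial R F) (he : e ∈ F) : e.1 ∈ R := (hF.1 e he).2.1

lemma head_mem (hF : RSpecial R F) (he : e ∈ F) : e.2 ∈ R := (hF.1 e he).2.2

lemma head_ne_zero (hF : RSpecial R F) (he : e ∈ F) : e.2 ≠ 0 := hF.2.1 e he

lemma eq_of_head_eq (hF : RSpecial R F) (he : e ∈ F) (hf : f ∈ F) (h : e.2 = f.2) : e = f := by
  obtain ⟨_, _, hunique⟩ := hF.2.2.1 f.2 (hF.head_mem hf) (hF.head_ne_zero hf)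
  exact (hunique e ⟨he, h⟩).trans (hunique f ⟨hf, rfl⟩).symm

lemma reach_root (hF : RSpecial R F) (hv : v ∈ R) : Reach F 0 v := hF.2.2.2.1 v hv

lemma not_crosses (hF : RSpecial R F) (he : e ∈ F) (hf : f ∈ F) (hef : e ≠ f) :
    ¬Crosses e f :=
  hF.2.2.2.2.1 e he f hf hef

lemma not_same_direction (hF : RSpecial R F) (he : e ∈ F) (hf : f ∈ F) (hef : e ≠ f)
    (h : e.1 = f.1) : ¬((e.1 < e.2 ∧ f.1 < f.2) ∨ (e.2 < e.1 ∧ f.2 < f.1)) :=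
  hF.2.2.2.2.2 e he f hf hef h

lemma reach_tail_of_reach_head (hF : RSpecial R F) (he : e ∈ F) (h : Reach F w e.2)
    (hw : w ≠ e.2) : Reach F w e.1 := by
  rcases h.cases_tail with h | ⟨c, hwc, hc⟩
  · exact absurd h.symm hw
  · rwa [← congrArg Prod.fst (hF.eq_of_head_eq hc he rfl)]

lemma not_reach_of_mem (hF : RSpecial R F) (hu : Reach F 0 u) (huv : (u, v) ∈ F) :
    ¬Reach F v u := by
  induction hu generalizing v with
  | refl =>
    intro hv0
    rcases hv0.cases_tail with h | ⟨c, -, hc⟩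
    · exact hF.head_ne_zero huv h.symm
    · exact hF.head_ne_zero hc rfl
  | @tail x u _ hxu ih =>
    intro hvu
    have hvx : Reach F v x :=
      hF.reach_tail_of_reach_head hxu hvu (hF.tail_ne_head huv).symm
    exact ih hxu (ReflTransGen.head huv hvx)

lemma card_descendants_lt (hF : RSpecial R F) (hw : Reach F 0 w) (he : e ∈ F)
    (hwe : Reach F w e.1) : (descendants R F e.2).card < (descendants R F w).card := by
  refine Finset.card_lt_card ((Finset.ssubset_iff_of_subset fun x hx => ?_).2 ⟨e.1, ?_, ?_⟩)
  · rw [mem_descendants] at hx ⊢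
    exact ⟨hx.1, ReflTransGen.trans hwe (ReflTransGen.head he hx.2)⟩
  · exact mem_descendants.2 ⟨hF.tail_mem he, hwe⟩
  · exact fun h => hF.not_reach_of_mem (ReflTransGen.trans hw hwe) he (mem_descendants.1 h).2

lemma tail_eq_head_of_enters_under (hF : RSpecial R F) (he : e ∈ F) (hf : f ∈ F)
    (h : Enters e (under f)) : e.1 = f.2 := by
  obtain ⟨he2, he1⟩ := h
  rw [mem_under] at he1 he2
  have hef : e ≠ f := by rintro rfl; omega
  by_contra hne
  by_cases h1 : e.1 = f.1
  · exact hF.not_same_direction he hf hef h1 (by omega)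
  · exact hF.not_crosses he hf hef (by unfold Crosses; omega)

lemma reach_of_mem_under (hF : RSpecial R F) (hf : f ∈ F) (hx : Reach F 0 x)
    (hxf : x ∈ under f) : Reach F f.2 x := by
  obtain ⟨e, he, hent, -, hex⟩ := hx.exists_enters (by rw [mem_under]; omega) hxf
  have he1 := hF.tail_eq_head_of_enters_under he hf hent
  exact ReflTransGen.head (show (f.2, e.2) ∈ F from he1 ▸ he) hex

lemma reach_tail_of_head_mem_under (hF : RSpecial R F) (he : e ∈ F) (hf : f ∈ F)
    (h : f.2 ∈ under e) : Reach F e.2 f.1 := by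
  by_cases h1 : f.1 ∈ under e
  · exact hF.reach_of_mem_under he (hF.reach_root (hF.tail_mem hf)) h1
  · rw [hF.tail_eq_head_of_enters_under hf he ⟨h, h1⟩]
    exact .refl

lemma not_responsible_of_tail_mem_under (hF : RSpecial R F) (hf : f ∈ F) (hfC : Enters f C)
    (hg : g ∈ F) (h : g.1 ∈ under f) : ¬Responsible F g C := fun hgC =>
  hgC.2.2 f hf (hF.reach_of_mem_under hf (hF.reach_root (hF.tail_mem hg)) h) hfC

lemma exists_responsible (hF : RSpecial R F) (h0 : 0 ∉ C) (hvC : v ∈ C) (hvR : v ∈ R) :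
    ∃ f, Responsible F f C := by
  classical
  obtain ⟨e, he, hent, -, -⟩ := (hF.reach_root hvR).exists_enters h0 hvC
  obtain ⟨f, hf, hmax⟩ := (F.filter (Enters · C)).exists_max_image
    (fun f => (descendants R F f.2).card) ⟨e, Finset.mem_filter.2 ⟨he, hent⟩⟩
  rw [Finset.mem_filter] at hf
  refine ⟨f, hf.1, hf.2, fun g hg hgf hgC => ?_⟩
  have hle := hmax g (Finset.mem_filter.2 ⟨hg, hgC⟩)
  have hlt := hF.card_descendants_lt (hF.reach_root (hF.head_mem hg)) hf.1 hgf
  omega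

section Interval

variable {a b : ℕ}

lemma exists_deeper_common_ancestor (hF : RSpecial R F) (ha : 0 < a)
    (hf : Responsible F f (Icc a b)) (hg : Responsible F g (Icc a b)) (hfa : f.1 < a)
    (hgb : b < g.1) (hw : Reach F 0 w) (hwf : Reach F w f.1) (hwg : Reach F w g.1) :
    ∃ e ∈ F, Reach F w e.1 ∧ Reach F e.2 f.1 ∧ Reach F e.2 g.1 := by
  have h0 : 0 ∉ Icc a b := by rw [mem_Icc]; omega
  have hf2 := hf.2.1.1
  have hg2 := hg.2.1.1
  have hwC := hf.not_mem_of_reach h0 hw hwf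
  rw [mem_Icc] at hf2 hg2 hwC
  rcases (show w < a ∨ b < w by omega) with hwa | hbw
  · obtain ⟨e, he, ⟨he2, he1⟩, hwe, heg⟩ :=
      hwg.exists_enters (S := Ioi b) (by rw [mem_Ioi]; omega) (mem_Ioi.2 hgb)
    have he1C : e.1 ∉ Icc a b :=
      hg.not_mem_of_reach h0 (ReflTransGen.trans hw hwe) (ReflTransGen.head he heg)
    rw [mem_Ioi] at he1 he2
    rw [mem_Icc] at he1C
    exact ⟨e, he, hwe, hF.reach_tail_of_head_mem_under he hf.1 (by rw [mem_under]; omega), heg⟩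
  · obtain ⟨e, he, ⟨he2, he1⟩, hwe, hef⟩ :=
      hwf.exists_enters (S := Iio a) (by rw [mem_Iio]; omega) (mem_Iio.2 hfa)
    have he1C : e.1 ∉ Icc a b :=
      hf.not_mem_of_reach h0 (ReflTransGen.trans hw hwe) (ReflTransGen.head he hef)
    rw [mem_Iio] at he1 he2
    rw [mem_Icc] at he1C
    exact ⟨e, he, hwe, hef, hF.reach_tail_of_head_mem_under he hg.1 (by rw [mem_under]; omega)⟩

lemma not_responsible_of_tails_on_both_sides (hF : RSpecial R F) (ha : 0 < a)
    (hf : Responsible F f (Icc a b)) (hg : Responsible F g (Icc a b)) (hfa : f.1 < a)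
    (hgb : b < g.1) : False := by
  suffices ∀ w, Reach F 0 w → Reach F w f.1 → Reach F w g.1 → False from
    this 0 .refl (hF.reach_root (hF.tail_mem hf.1)) (hF.reach_root (hF.tail_mem hg.1))
  intro w
  induction hk : (descendants R F w).card using Nat.strong_induction_on generalizing w with
  | _ k ih =>
  intro hw hwf hwg
  obtain ⟨e, he, hwe, hef, heg⟩ :=
    hF.exists_deeper_common_ancestor ha hf hg hfa hgb hw hwf hwg
  have h0e : Reach F 0 e.2 := ReflTransGen.tail (ReflTransGen.trans hw hwe) he
  exact ih _ (hk ▸ hF.card_descendants_lt hw he hwe) e.2 rfl h0e hef heg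

lemma eq_of_responsible_of_tail_le (hF : RSpecial R F) (ha : 0 < a)
    (hf : Responsible F f (Icc a b)) (hg : Responsible F g (Icc a b)) (hfg : f.1 ≤ g.1) :
    f = g := by
  by_contra hne
  obtain ⟨hf2, hf1⟩ := hf.2.1
  obtain ⟨hg2, hg1⟩ := hg.2.1
  rw [mem_Icc] at hf1 hf2 hg1 hg2
  rcases hfg.eq_or_lt with h | hlt
  · exact hF.not_same_direction hf.1 hg.1 hne h (by omega)
  rcases (show g.1 < a ∨ b < f.1 ∨ (f.1 < a ∧ b < g.1) by omega) with h | h | ⟨hfa, hgb⟩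
  · exact hF.not_responsible_of_tail_mem_under hf.1 hf.2.1 hg.1 (by rw [mem_under]; omega) hg
  · exact hF.not_responsible_of_tail_mem_under hg.1 hg.2.1 hf.1 (by rw [mem_under]; omega) hf
  · exact hF.not_responsible_of_tails_on_both_sides ha hf hg hfa hgb

end Interval

end RSpecial

theorem stmt5_general (n : ℕ) (R : Finset ℕ) (F : Finset (ℕ × ℕ)) (hsp : RSpecial R F) :
    ∀ C : Set ℕ, IsRingCut n C → (C ∩ ↑R).Nonempty →
      ∃! f : ℕ × ℕ, Responsible F f C := by
  rintro C ⟨a, b, ha, -, -, rfl⟩ ⟨v, hvC, hvR⟩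
  obtain ⟨f, hf⟩ := hsp.exists_responsible (by rw [mem_Icc]; omega) hvC hvR
  refine ⟨f, hf, fun g hg => ?_⟩
  rcases le_total g.1 f.1 with h | h
  · exact hsp.eq_of_responsible_of_tail_le ha hg hf h
  · exact (hsp.eq_of_responsible_of_tail_le ha hf hg h).symm

/-- For a feasible `R`-special directed solution `F`, every dangerous ring-cut has
exactly one directed link of `F` responsible for it. -/
theorem stmt5 (n : ℕ) (hn : 3 ≤ n) (R : Finset ℕ) (hR : R ⊆ Finset.range n) (hr : 0 ∈ R)
    (F : Finset (ℕ × ℕ)) (hsp : RSpecial R F) (hfeas : FeasibleDir n R F) :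
    ∀ C : Set ℕ, IsRingCut n C → (C ∩ ↑R).Nonempty →
      ∃! f : ℕ × ℕ, Responsible F f C :=
  stmt5_general n R F hsp
end

section
/- Let F be a feasible R-special directed solution. A directed link (u,v) ∈ F is responsible for a dangerous ring-cut C if and only if v ∈ C and every vertex of C is v-bad (equivalently, C ⊆ I_v). -/
/-! Every terminal of `I_v` descends from `v`, so if `C ⊆ I_v` no ancestor of `u` can lie in `C`
without closing a cycle through `(u, v)`. Conversely, let `(u, v)` be responsible for `C`. Since the
links neither cross nor leave a vertex twice in one direction, a link whose interval strictly
contains a terminal `w` has `w` among the descendants of its head. Consequently every link entering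
`C` lands at a descendant of `v`; following the root path of a terminal of `C` to its last entry
into `C` shows that all terminals of `C` descend from `v`, and maximality of `I_v` gives
`C ⊆ I_v`. -/

theorem Reach.exists_enters_s6 {F : Finset (ℕ × ℕ)} {S : Set ℕ} {a b : ℕ} (h : Reach F a b)
    (ha : a ∉ S) (hb : b ∈ S) : ∃ f ∈ F, Enters f S ∧ Reach F f.2 b := by
  induction h with
  | refl => exact absurd hb ha
  | @tail c d _ hcd ih =>
    by_cases hc : c ∈ S
    · obtain ⟨f, hf, hfS, hfc⟩ := ih hc
      exact ⟨f, hf, hfS, hfc.tail hcd⟩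
    · exact ⟨(c, d), hcd, ⟨hb, hc⟩, .refl⟩

namespace RSpecial

variable {R : Finset ℕ} {F : Finset (ℕ × ℕ)}

theorem fst_eq_of_mem (hsp : RSpecial R F) {a b v : ℕ} (ha : (a, v) ∈ F) (hb : (b, v) ∈ F) :
    a = b :=
  congrArg Prod.fst <|
    (hsp.2.2.1 v (hsp.1 _ ha).2.2 (hsp.2.1 _ ha)).unique ⟨ha, rfl⟩ ⟨hb, rfl⟩

theorem eq_or_reach_fst (hsp : RSpecial R F) {u v w : ℕ} (hf : (u, v) ∈ F)
    (h : Reach F w v) : w = v ∨ Reach F w u := by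
  rcases Relation.ReflTransGen.cases_tail h with rfl | ⟨q, hwq, hqv⟩
  · exact .inl rfl
  · exact .inr (hsp.fst_eq_of_mem hqv hf ▸ hwq)

theorem not_reach_fst (hsp : RSpecial R F) {u v : ℕ} (hf : (u, v) ∈ F) : ¬Reach F v u := by
  induction hsp.2.2.2.1 u (hsp.1 _ hf).2.1 generalizing v with
  | refl =>
    intro h
    rcases Relation.ReflTransGen.cases_tail h with rfl | ⟨q, -, hq⟩
    · exact hsp.2.1 _ hf rfl
    · exact hsp.2.1 _ hq rfl
  | @tail b w _ hbw ih =>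
    intro h
    rcases hsp.eq_or_reach_fst hbw h with rfl | hvb
    · exact (hsp.1 _ hf).1 rfl
    · exact ih hbw ((Relation.ReflTransGen.single hf).trans hvb)

theorem reach_of_mem_Ioo (hsp : RSpecial R F) {x y w : ℕ} (hxy : (x, y) ∈ F) (hw : w ∈ R)
    (hw' : w ∈ Set.Ioo (min x y) (max x y)) : Reach F y w := by
  obtain ⟨⟨s, t⟩, hst, ⟨ht, hs⟩, htw⟩ :=
    (hsp.2.2.2.1 w hw).exists_enters_s6 (fun h => Nat.not_lt_zero _ h.1) hw'
  simp only [Set.mem_Ioo] at ht hs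
  have hxy_ne := (hsp.1 _ hxy).1
  by_cases hsy : s = y
  · exact hsy ▸ Relation.ReflTransGen.head hst htw
  have hne : (s, t) ≠ (x, y) := fun h => by
    rw [Prod.ext_iff] at h
    omega
  by_cases hsx : s = x
  · -- `(x, t)` and `(x, y)` would leave `x` in the same direction
    subst hsx
    exact absurd (by omega) (hsp.2.2.2.2.2 _ hst _ hxy hne rfl)
  · exact absurd (by unfold Crosses; omega) (hsp.2.2.2.2.1 _ hst _ hxy hne)

theorem exists_lca (hsp : RSpecial R F) {x z : ℕ} (hx : Reach F 0 x) (hz : Reach F 0 z) :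
    ∃ m, Reach F 0 m ∧ Reach F m x ∧ Reach F m z ∧
      ∀ s, (m, s) ∈ F → Reach F s x → ¬Reach F s z := by
  induction hx with
  | refl => exact ⟨0, .refl, .refl, hz, fun s hs h0 _ => hsp.not_reach_fst hs h0⟩
  | @tail b x h0b hbx ih =>
    by_cases hxz : Reach F x z
    · exact ⟨x, h0b.tail hbx, .refl, hxz, fun s hs hsx _ => hsp.not_reach_fst hs hsx⟩
    obtain ⟨m, h0m, hmb, hmz, hm⟩ := ih
    refine ⟨m, h0m, hmb.tail hbx, hmz, fun s hs hsx hsz => ?_⟩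
    rcases hsp.eq_or_reach_fst hbx hsx with rfl | hsb
    · exact hxz hsz
    · exact hm s hs hsb hsz

/-- Below a deepest common ancestor `m` of `x` and `y`, no link of the branch from `m` to `x`
jumps over `y` (it would make `y` a descendant of that branch). -/
theorem lt_iff_lt_of_reach (hsp : RSpecial R F) {m w x y : ℕ} (hy : y ∈ R)
    (hyx : ¬Reach F y x) (hm : ∀ s, (m, s) ∈ F → Reach F s x → ¬Reach F s y)
    (hmw : Reach F m w) (hwx : Reach F w x) : w < y ↔ m < y := by
  induction hmw with
  | refl => rfl
  | @tail b w hmb hbw ih =>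
    have hbx := (Relation.ReflTransGen.single hbw).trans hwx
    have hby : b ≠ y := fun h => hyx (h ▸ hbx)
    have hwy : w ≠ y := fun h => hyx (h ▸ hwx)
    have hjump : y ∉ Set.Ioo (min b w) (max b w) := fun hy' => by
      obtain ⟨s, hs, hsw⟩ := Relation.TransGen.head'_iff.mp (Relation.TransGen.tail' hmb hbw)
      exact hm s hs (hsw.trans hwx) (hsw.trans (hsp.reach_of_mem_Ioo hbw hy hy'))
    rw [Set.mem_Ioo] at hjump
    rw [← ih hbx]
    omega

end RSpecial

namespace Responsible

variable {R : Finset ℕ} {F : Finset (ℕ × ℕ)} {u v : ℕ} {C : Set ℕ}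

theorem not_mem_of_reach_s6 (resp : Responsible F (u, v) C) (h0 : 0 ∉ C) {w : ℕ}
    (h0w : Reach F 0 w) (hwu : Reach F w u) : w ∉ C := fun hw => by
  obtain ⟨g, hg, hgC, hgw⟩ := h0w.exists_enters_s6 h0 hw
  exact resp.2.2 g hg (hgw.trans hwu) hgC

/-- If the head `z` did not descend from `v`, a deepest common ancestor of `v` and `z` would lie
outside `[c, d]`, while its branches towards `v` and `z` cannot pass `z` and `v` respectively;
this is impossible when both `v` and `z` lie in `[c, d]`. -/
theorem reach_snd_of_enters (hsp : RSpecial R F) {c d : ℕ} (hc : 0 < c)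
    (resp : Responsible F (u, v) (Set.Icc c d)) {g : ℕ × ℕ} (hg : g ∈ F)
    (hgC : Enters g (Set.Icc c d)) : Reach F v g.2 := by
  by_contra hvz
  have hf := resp.1
  have hvR := (hsp.1 _ hf).2.2
  have hzR := (hsp.1 _ hg).2.2
  have hzv : ¬Reach F g.2 v := fun h => by
    rcases hsp.eq_or_reach_fst hf h with h' | h'
    · exact hvz (h' ▸ .refl)
    · exact resp.2.2 g hg h' hgC
  obtain ⟨m, h0m, hmv, hmz, hm⟩ := hsp.exists_lca (hsp.2.2.2.1 v hvR) (hsp.2.2.2.1 g.2 hzR)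
  have hmC : m ∉ Set.Icc c d := by
    rcases hsp.eq_or_reach_fst hf hmv with rfl | hmu
    · exact absurd hmz hvz
    · exact resp.not_mem_of_reach_s6 (fun h => by simp at h; omega) h0m hmu
  have hv := hsp.lt_iff_lt_of_reach hzR hzv hm hmv .refl
  have hz := hsp.lt_iff_lt_of_reach hvR hvz (fun s hs hsz hsv => hm s hs hsv hsz) hmz .refl
  have hvz' : v ≠ g.2 := fun h => hvz (h ▸ .refl)
  have hvC := resp.2.1.1
  have hzC := hgC.1
  simp only [Set.mem_Icc] at hvC hzC hmC
  omega

theorem reach_of_mem (hsp : RSpecial R F) {c d : ℕ} (hc : 0 < c)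
    (resp : Responsible F (u, v) (Set.Icc c d)) {w : ℕ} (hw : w ∈ R) (hwC : w ∈ Set.Icc c d) :
    Reach F v w := by
  obtain ⟨g, hg, hgC, hgw⟩ :=
    (hsp.2.2.2.1 w hw).exists_enters_s6 (fun h => by simp at h; omega) hwC
  exact (reach_snd_of_enters hsp hc resp hg hgC).trans hgw

end Responsible

section BadInterval

variable {n : ℕ} {R : Finset ℕ} {F : Finset (ℕ × ℕ)} {v : ℕ}

theorem exists_isBadInterval (hv : v < n) : ∃ a b, IsBadInterval n R F v a b := by
  classical
  set P : ℕ → Prop := fun x => ∀ w ∈ R, x ≤ w → w ≤ v → Reach F v w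
  set Q : ℕ → Prop := fun y => ∀ w ∈ R, v ≤ w → w ≤ y → Reach F v w
  have hPv : P v := fun w _ h₁ h₂ => le_antisymm h₂ h₁ ▸ .refl
  have hQv : Q v := fun w _ h₁ h₂ => le_antisymm h₂ h₁ ▸ .refl
  have hP : ∃ x, P x := ⟨v, hPv⟩
  have hav : Nat.find hP ≤ v := Nat.find_min' hP hPv
  have hvb : v ≤ Nat.findGreatest Q (n - 1) := Nat.le_findGreatest (by omega) hQv
  refine ⟨Nat.find hP, Nat.findGreatest Q (n - 1), hav, hvb, Nat.findGreatest_le _,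
    fun w hw h₁ h₂ => ?_, fun a' b' ha' hb' hb'n hab' => ⟨?_, ?_⟩⟩
  · rcases le_total w v with h | h
    · exact Nat.find_spec hP w hw h₁ h
    · exact Nat.findGreatest_spec (by omega) hQv w hw h h₂
  · exact le_antisymm ha' (Nat.find_min' hP fun w hw h₁ h₂ => hab' w hw h₁ (by omega))
  · exact le_antisymm
      (Nat.le_findGreatest hb'n fun w hw h₁ h₂ => hab' w hw (by omega) h₂) hb'

theorem IsBadInterval.Icc_subset {a b c d : ℕ} (hI : IsBadInterval n R F v a b)
    (hv : v ∈ Set.Icc c d) (hd : d ≤ n - 1)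
    (hcd : ∀ w ∈ R, c ≤ w → w ≤ d → Reach F v w) :
    Set.Icc c d ⊆ Set.Icc a b := by
  obtain ⟨hav, hvb, hbn, hab, hmax⟩ := hI
  have hv := Set.mem_Icc.mp hv
  have h := hmax (min a c) (max b d) (min_le_left a c) (le_max_left b d) (max_le hbn hd)
    fun w hw h₁ h₂ =>
      if h : a ≤ w ∧ w ≤ b then hab w hw h.1 h.2 else hcd w hw (by omega) (by omega)
  exact Set.Icc_subset_Icc (by omega) (by omega)

end BadInterval

theorem stmt6_general (n : ℕ) (R : Finset ℕ) (hR : R ⊆ Finset.range n)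
    (F : Finset (ℕ × ℕ)) (hsp : RSpecial R F)
    (u v : ℕ) (hf : (u, v) ∈ F)
    (C : Set ℕ) (hC : IsRingCut n C) :
    Responsible F (u, v) C ↔
      v ∈ C ∧ ∃ a b : ℕ, IsBadInterval n R F v a b ∧ C ⊆ Set.Icc a b := by
  obtain ⟨c, d, hc, -, hd, rfl⟩ := hC
  constructor
  · intro resp
    have hv : v < n := Finset.mem_range.mp (hR (hsp.1 _ hf).2.2)
    obtain ⟨a, b, hI⟩ := exists_isBadInterval hv
    exact ⟨resp.2.1.1, a, b, hI, hI.Icc_subset resp.2.1.1 hd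
      fun w hw h₁ h₂ => resp.reach_of_mem hsp hc hw ⟨h₁, h₂⟩⟩
  · rintro ⟨hvC, a, b, ⟨-, -, -, hab, -⟩, hsub⟩
    have hreach : ∀ w ∈ R, w ∈ Set.Icc c d → ¬Reach F w u := fun w hw hwC hwu =>
      hsp.not_reach_fst hf ((hab w hw (hsub hwC).1 (hsub hwC).2).trans hwu)
    exact ⟨hf, ⟨hvC, fun huC => hreach u (hsp.1 _ hf).2.1 huC .refl⟩,
      fun g hg hgu hgC => hreach g.2 (hsp.1 _ hg).2.2 hgC.1 hgu⟩

/-- A directed link `(u,v) ∈ F` is responsible for a dangerous ring-cut `C` iff `v ∈ C`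
and every vertex of `C` is `v`-bad, i.e. `C ⊆ I_v`. -/
theorem stmt6 (n : ℕ) (hn : 3 ≤ n) (R : Finset ℕ) (hR : R ⊆ Finset.range n) (hr : 0 ∈ R)
    (F : Finset (ℕ × ℕ)) (hsp : RSpecial R F) (hfeas : FeasibleDir n R F)
    (u v : ℕ) (hf : (u, v) ∈ F)
    (C : Set ℕ) (hC : IsRingCut n C) (hCR : (C ∩ ↑R).Nonempty) :
    Responsible F (u, v) C ↔
      v ∈ C ∧ ∃ a b : ℕ, IsBadInterval n R F v a b ∧ C ⊆ Set.Icc a b :=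
  stmt6_general n R hR F hsp u v hf C hC
end

section
/- Let X be a festoon of hyper-links and C a ring-cut. Then the number of hyper-links in X which cover C is at most 4. -/
open scoped Classical

/-- The interval `I_ℓ = {min ℓ, …, max ℓ}` of a hyper-link `ℓ`. -/
def hlInterval (ℓ : Finset ℕ) : Set ℕ :=
  {x : ℕ | ∃ a ∈ ℓ, ∃ b ∈ ℓ, a ≤ x ∧ x ≤ b}

/-- Two hyper-links are crossing if their intervals intersect and neither interval
contains the other. -/
def CrossingHL (ℓ ℓ' : Finset ℕ) : Prop :=
  (hlInterval ℓ ∩ hlInterval ℓ').Nonempty ∧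
    ¬hlInterval ℓ ⊆ hlInterval ℓ' ∧ ¬hlInterval ℓ' ⊆ hlInterval ℓ

/-- A festoon: a finite set of hyper-links admitting an ordering `ℓ₁, …, ℓ_p` such that
consecutive hyper-links cross and non-consecutive hyper-links have disjoint intervals. -/
def IsFestoon (X : Finset (Finset ℕ)) : Prop :=
  ∃ l : List (Finset ℕ), l.Nodup ∧ (∀ ℓ : Finset ℕ, ℓ ∈ l ↔ ℓ ∈ X) ∧
    (∀ (i : ℕ) (h : i + 1 < l.length),
      CrossingHL (l.get ⟨i, Nat.lt_of_succ_lt h⟩) (l.get ⟨i + 1, h⟩)) ∧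
    ∀ (i j : ℕ) (hi : i < l.length) (hj : j < l.length), (i + 2 ≤ j ∨ j + 2 ≤ i) →
      hlInterval (l.get ⟨i, hi⟩) ∩ hlInterval (l.get ⟨j, hj⟩) = ∅

/-!
A hyper-link covering the cut `{a, …, b}` has one vertex inside the cut and one outside, so its
interval contains `a` or `b`. In a festoon only consecutive hyper-links have overlapping
intervals, so every point lies in the intervals of at most two of them; hence at most `2 + 2`
hyper-links cover the cut.
-/

open Finset

theorem Finset.card_le_two_of_forall_le_add_one {s : Finset ℕ}
    (h : ∀ i ∈ s, ∀ j ∈ s, j ≤ i + 1) : #s ≤ 2 := by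
  rcases s.eq_empty_or_nonempty with rfl | hs
  · simp
  calc #s ≤ #(Icc (s.min' hs) (s.min' hs + 1)) :=
        card_le_card fun j hj => mem_Icc.2 ⟨s.min'_le j hj, h _ (s.min'_mem hs) j hj⟩
    _ = 2 := by rw [Nat.card_Icc]; omega

theorem card_filter_mem_le_two_of_disjoint {α β : Type*} [DecidableEq β] (l : List β)
    (f : β → Set α)
    (hdisj : ∀ (i j : ℕ) (hi : i < l.length) (hj : j < l.length), (i + 2 ≤ j ∨ j + 2 ≤ i) →
      f (l.get ⟨i, hi⟩) ∩ f (l.get ⟨j, hj⟩) = ∅)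
    (X : Finset β) (hX : ∀ ℓ ∈ X, ℓ ∈ l) (x : α) :
    #(X.filter fun ℓ => x ∈ f ℓ) ≤ 2 := by
  set S := X.filter fun ℓ => x ∈ f ℓ
  have hS : ∀ ℓ ∈ S, ∃ h : l.idxOf ℓ < l.length, x ∈ f (l.get ⟨_, h⟩) := by
    intro ℓ hℓ
    obtain ⟨hℓX, hxℓ⟩ := mem_filter.1 hℓ
    have h := List.idxOf_lt_length_of_mem (hX ℓ hℓX)
    exact ⟨h, by simpa [List.getElem_idxOf h] using hxℓ⟩
  calc #S ≤ #(S.image l.idxOf) :=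
        card_le_card_of_injOn _ (fun ℓ hℓ => mem_image_of_mem _ hℓ) fun ℓ hℓ ℓ' _ hidx =>
          (List.idxOf_inj (hX ℓ (mem_filter.1 hℓ).1)).1 hidx
    _ ≤ 2 := by
      refine card_le_two_of_forall_le_add_one ?_
      simp only [mem_image]
      rintro _ ⟨ℓ, hℓ, rfl⟩ _ ⟨ℓ', hℓ', rfl⟩
      obtain ⟨h, hx⟩ := hS ℓ hℓ
      obtain ⟨h', hx'⟩ := hS ℓ' hℓ'
      by_contra! hfar
      exact (hdisj _ _ h h' (Or.inl hfar)).subset ⟨hx, hx'⟩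

theorem mem_hlInterval_of_covers_Icc {ℓ : Finset ℕ} {a b : ℕ} (h : Covers ℓ (Set.Icc a b)) :
    a ∈ hlInterval ℓ ∨ b ∈ hlInterval ℓ := by
  obtain ⟨⟨u, hu, hau, hub⟩, ⟨v, hv, hvC⟩⟩ := h
  rcases lt_or_ge v a with hva | hav
  · exact Or.inl ⟨v, hv, u, hu, hva.le, hau⟩
  · exact Or.inr ⟨u, hu, v, hv, hub, (not_le.1 fun hvb => hvC ⟨hav, hvb⟩).le⟩

theorem stmt8_general (n : ℕ) (X : Finset (Finset ℕ))
    (hfest : IsFestoon X) (C : Set ℕ) (hC : IsRingCut n C) :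
    (X.filter fun ℓ => Covers ℓ C).card ≤ 4 := by
  obtain ⟨a, b, -, -, -, rfl⟩ := hC
  obtain ⟨l, -, hmem, -, hdisj⟩ := hfest
  have hpoint (x : ℕ) : #(X.filter fun ℓ => x ∈ hlInterval ℓ) ≤ 2 :=
    card_filter_mem_le_two_of_disjoint l hlInterval hdisj X (fun ℓ hℓ => (hmem ℓ).2 hℓ) x
  calc #(X.filter fun ℓ => Covers ℓ (Set.Icc a b))
      ≤ #((X.filter fun ℓ => a ∈ hlInterval ℓ) ∪ X.filter fun ℓ => b ∈ hlInterval ℓ) := by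
        rw [← filter_or]
        exact card_le_card (monotone_filter_right _ fun _ _ => mem_hlInterval_of_covers_Icc)
    _ ≤ 2 + 2 := (card_union_le _ _).trans (add_le_add (hpoint a) (hpoint b))

/-- At most 4 hyper-links of a festoon cover any given ring-cut. -/
theorem stmt8 (n : ℕ) (hn : 3 ≤ n) (X : Finset (Finset ℕ))
    (hX : ∀ ℓ ∈ X, ℓ ⊆ Finset.range n ∧ 2 ≤ ℓ.card)
    (hfest : IsFestoon X) (C : Set ℕ) (hC : IsRingCut n C) :
    (X.filter fun ℓ => Covers ℓ C).card ≤ 4 :=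
  stmt8_general n X hfest C hC
end

section
/- Every finite set S of hyper-links can be partitioned into festoons X₁,…,X_m such that the family of festoon intervals {I_{X_1},…,I_{X_m}} is laminar. -/
/-- The festoon interval `I_X`: the interval from the smallest to the largest vertex
appearing in a hyper-link of `X`. -/
def festoonInterval (X : Finset (Finset ℕ)) : Set ℕ :=
  hlInterval (X.sup id)

/-!
Sweep from the left. Let `a` be the leftmost vertex of a link of `S` and iterate
`x ↦ reach S x`, the rightmost vertex of a link of `S` starting at or before `x`, from `a` until
it stabilises at some `b`. A link realising each new value of the iteration gives a festoon
with interval `[a, b]`, and by the choice of `b` every link of `S` lies in `[a, b]` or strictly to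
the right of `b`. Crossing links meet, so every festoon of the remaining links lies entirely on
one side of `b`; removing the festoon and recursing therefore keeps the intervals laminar.
-/

noncomputable def hlMin (ℓ : Finset ℕ) : ℕ := sInf (ℓ : Set ℕ)

noncomputable def hlMax (ℓ : Finset ℕ) : ℕ := sSup (ℓ : Set ℕ)

lemma hlMin_mem {ℓ : Finset ℕ} (h : ℓ.Nonempty) : hlMin ℓ ∈ ℓ := h.csInf_mem

lemma hlMax_mem {ℓ : Finset ℕ} (h : ℓ.Nonempty) : hlMax ℓ ∈ ℓ := h.csSup_mem

lemma hlMin_le {ℓ : Finset ℕ} {x : ℕ} (hx : x ∈ ℓ) : hlMin ℓ ≤ x :=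
  csInf_le (OrderBot.bddBelow _) hx

lemma le_hlMax {ℓ : Finset ℕ} {x : ℕ} (hx : x ∈ ℓ) : x ≤ hlMax ℓ :=
  le_csSup ℓ.bddAbove hx

lemma hlMin_le_hlMax {ℓ : Finset ℕ} (h : ℓ.Nonempty) : hlMin ℓ ≤ hlMax ℓ :=
  hlMin_le (hlMax_mem h)

lemma hlInterval_eq_Icc {ℓ : Finset ℕ} (h : ℓ.Nonempty) :
    hlInterval ℓ = Set.Icc (hlMin ℓ) (hlMax ℓ) := by
  ext x
  constructor
  · rintro ⟨a, ha, b, hb, hax, hxb⟩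
    exact ⟨(hlMin_le ha).trans hax, hxb.trans (le_hlMax hb)⟩
  · rintro ⟨hx₁, hx₂⟩
    exact ⟨_, hlMin_mem h, _, hlMax_mem h, hx₁, hx₂⟩

lemma hlInterval_subset_iff {ℓ : Finset ℕ} {T : Set ℕ} [T.OrdConnected] :
    hlInterval ℓ ⊆ T ↔ (ℓ : Set ℕ) ⊆ T := by
  constructor
  · intro h x hx
    exact h ⟨x, hx, x, hx, le_rfl, le_rfl⟩
  · rintro h x ⟨a, ha, b, hb, hax, hxb⟩
    exact Set.OrdConnected.out ‹_› (h ha) (h hb) ⟨hax, hxb⟩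

lemma festoonInterval_subset_iff {X : Finset (Finset ℕ)} {T : Set ℕ} [T.OrdConnected] :
    festoonInterval X ⊆ T ↔ ∀ ℓ ∈ X, hlInterval ℓ ⊆ T := by
  simp only [festoonInterval, hlInterval_subset_iff]
  simp only [Set.subset_def, Finset.mem_coe, Finset.mem_sup, id]
  exact ⟨fun h ℓ hℓ x hx => h x ⟨ℓ, hℓ, hx⟩, fun h x ⟨ℓ, hℓ, hx⟩ => h ℓ hℓ x hx⟩

lemma Icc_subset_festoonInterval {X : Finset (Finset ℕ)} {ℓ ℓ' : Finset ℕ} {a b : ℕ}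
    (hℓ : ℓ ∈ X) (ha : a ∈ ℓ) (hℓ' : ℓ' ∈ X) (hb : b ∈ ℓ') :
    Set.Icc a b ⊆ festoonInterval X := fun _ hx =>
  ⟨a, Finset.mem_sup.2 ⟨ℓ, hℓ, ha⟩, b, Finset.mem_sup.2 ⟨ℓ', hℓ', hb⟩, hx⟩

lemma crossingHL_of_lt {ℓ ℓ' : Finset ℕ} (h : ℓ.Nonempty) (h' : ℓ'.Nonempty)
    (hmin : hlMin ℓ < hlMin ℓ') (hmeet : hlMin ℓ' ≤ hlMax ℓ) (hmax : hlMax ℓ < hlMax ℓ') :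
    CrossingHL ℓ ℓ' := by
  rw [CrossingHL, hlInterval_eq_Icc h, hlInterval_eq_Icc h', Set.Icc_subset_Icc_iff
    (hlMin_le_hlMax h), Set.Icc_subset_Icc_iff (hlMin_le_hlMax h')]
  exact ⟨⟨hlMin ℓ', ⟨hmin.le, hmeet⟩, le_rfl, hlMin_le_hlMax h'⟩, by omega, by omega⟩

lemma hlInterval_inter_eq_empty {ℓ ℓ' : Finset ℕ} (h : hlMax ℓ < hlMin ℓ') :
    hlInterval ℓ ∩ hlInterval ℓ' = ∅ :=
  Set.disjoint_iff_inter_eq_empty.1 <| (Set.Iic_disjoint_Ici.2 h.not_ge).mono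
    (hlInterval_subset_iff (T := Set.Iic _).2 fun _ => le_hlMax)
    (hlInterval_subset_iff (T := Set.Ici _).2 fun _ => hlMin_le)

lemma isFestoon_image_range {c : ℕ → Finset ℕ} {m : ℕ} (hinj : Set.InjOn c (Set.Iio m))
    (hcross : ∀ i, i + 1 < m → CrossingHL (c i) (c (i + 1)))
    (hdisj : ∀ i j, i + 2 ≤ j → j < m → hlInterval (c i) ∩ hlInterval (c j) = ∅) :
    IsFestoon ((Finset.range m).image c) := by
  refine ⟨(List.range m).map c, ?_, ?_, ?_, ?_⟩
  · exact List.Nodup.map_on (fun i hi j hj => hinj (List.mem_range.1 hi) (List.mem_range.1 hj))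
      List.nodup_range
  · simp
  · intro i h
    simp only [List.length_map, List.length_range] at h
    simpa using hcross i h
  · intro i j hi hj hij
    simp only [List.length_map, List.length_range] at hi hj
    simp only [List.get_eq_getElem, List.getElem_map, List.getElem_range]
    rcases hij with hij | hij
    · exact hdisj i j hij hj
    · rw [Set.inter_comm]
      exact hdisj j i hij hi

lemma IsFestoon.iff_of_crossingHL {Y : Finset (Finset ℕ)} (hY : IsFestoon Y)
    {P : Finset ℕ → Prop} (hP : ∀ ℓ ∈ Y, ∀ ℓ' ∈ Y, CrossingHL ℓ ℓ' → (P ℓ ↔ P ℓ'))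
    {ℓ ℓ' : Finset ℕ} (hℓ : ℓ ∈ Y) (hℓ' : ℓ' ∈ Y) : P ℓ ↔ P ℓ' := by
  obtain ⟨l, -, hmem, hcross, -⟩ := hY
  have hl : ∀ (i : ℕ) (hi : i < l.length), l[i] ∈ Y := fun i hi => (hmem _).1 (l.getElem_mem hi)
  have hfirst : ∀ (i : ℕ) (hi : i < l.length), P l[i] ↔ P l[0] := by
    intro i hi
    induction i with
    | zero => rfl
    | succ i ih =>
      exact (hP _ (hl i (by omega)) _ (hl (i + 1) hi) (hcross i hi)).symm.trans (ih (by omega))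
  obtain ⟨i, hi, rfl⟩ := List.getElem_of_mem ((hmem ℓ).2 hℓ)
  obtain ⟨j, hj, rfl⟩ := List.getElem_of_mem ((hmem ℓ').2 hℓ')
  exact (hfirst i hi).trans (hfirst j hj).symm

lemma IsFestoon.festoonInterval_subset_or_subset {Y : Finset (Finset ℕ)} (hY : IsFestoon Y)
    {T U : Set ℕ} [T.OrdConnected] [U.OrdConnected] (hTU : Disjoint T U)
    (hside : ∀ ℓ ∈ Y, hlInterval ℓ ⊆ T ∨ hlInterval ℓ ⊆ U) :
    festoonInterval Y ⊆ T ∨ festoonInterval Y ⊆ U := by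
  have hcross : ∀ ℓ ∈ Y, ∀ ℓ' ∈ Y, CrossingHL ℓ ℓ' →
      (hlInterval ℓ ⊆ T ↔ hlInterval ℓ' ⊆ T) := by
    rintro ℓ hℓ ℓ' hℓ' ⟨⟨x, hx, hx'⟩, -⟩
    have hT : ∀ ℓ ∈ Y, x ∈ hlInterval ℓ → (hlInterval ℓ ⊆ T ↔ x ∈ T) := by
      intro ℓ hℓ hx
      refine ⟨fun h => h hx, fun hxT => (hside ℓ hℓ).resolve_right fun hU => ?_⟩
      exact hTU.ne_of_mem hxT (hU hx) rfl
    rw [hT ℓ hℓ hx, hT ℓ' hℓ' hx']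
  simp only [festoonInterval_subset_iff]
  by_cases h : ∃ ℓ ∈ Y, hlInterval ℓ ⊆ T
  · obtain ⟨ℓ, hℓ, hT⟩ := h
    exact Or.inl fun ℓ' hℓ' => (hY.iff_of_crossingHL hcross hℓ hℓ').1 hT
  · exact Or.inr fun ℓ hℓ => (hside ℓ hℓ).resolve_left fun hT => h ⟨ℓ, hℓ, hT⟩

noncomputable def reach (S : Finset (Finset ℕ)) (x : ℕ) : ℕ :=
  {ℓ ∈ S | hlMin ℓ ≤ x}.sup hlMax

lemma reach_mono (S : Finset (Finset ℕ)) : Monotone (reach S) := fun _ _ hxy =>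
  Finset.sup_mono (Finset.monotone_filter_right S fun _ _ h => h.trans hxy)

lemma le_reach {S : Finset (Finset ℕ)} {ℓ : Finset ℕ} {x : ℕ} (hℓ : ℓ ∈ S) (hx : hlMin ℓ ≤ x) :
    hlMax ℓ ≤ reach S x :=
  Finset.le_sup (Finset.mem_filter.2 ⟨hℓ, hx⟩)

lemma reach_le_sup (S : Finset (Finset ℕ)) (x : ℕ) : reach S x ≤ S.sup hlMax :=
  Finset.sup_mono (Finset.filter_subset _ S)

lemma exists_hlMax_eq_reach {S : Finset (Finset ℕ)} {ℓ : Finset ℕ} {x : ℕ} (hℓ : ℓ ∈ S)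
    (hx : hlMin ℓ ≤ x) : ∃ ℓ' ∈ S, hlMin ℓ' ≤ x ∧ hlMax ℓ' = reach S x := by
  obtain ⟨ℓ', hℓ', heq⟩ :=
    Finset.exists_mem_eq_sup {ℓ ∈ S | hlMin ℓ ≤ x} ⟨ℓ, Finset.mem_filter.2 ⟨hℓ, hx⟩⟩ hlMax
  rw [Finset.mem_filter] at hℓ'
  exact ⟨ℓ', hℓ'.1, hℓ'.2, heq.symm⟩

lemma Monotone.exists_apply_succ_eq_of_le {u : ℕ → ℕ} (hu : Monotone u) {B : ℕ}
    (hB : ∀ k, u k ≤ B) :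
    ∃ p, u (p + 1) = u p := by
  by_contra! h
  have hstrict : StrictMono u := strictMono_nat_of_lt_succ fun k => (hu k.le_succ).lt_of_ne' (h k)
  exact (hstrict.id_le (B + 1)).not_gt (Nat.lt_succ_of_le (hB (B + 1)))

/-- The festoon is `c 0, …, c p`; the sequence `t` increases strictly up to `t (p + 1)` and then
stays there. -/
structure IsGreedyChain (S : Finset (Finset ℕ)) (t : ℕ → ℕ) (c : ℕ → Finset ℕ) (p : ℕ) :
    Prop where
  succ_eq_reach : ∀ k, t (k + 1) = reach S (t k)
  monotone : Monotone t
  mem : ∀ k, c k ∈ S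
  hlMin_le : ∀ k, hlMin (c k) ≤ t k
  hlMax_eq : ∀ k, hlMax (c k) = t (k + 1)
  lt_succ : ∀ k < p, t (k + 1) < t (k + 2)
  stable : t (p + 2) = t (p + 1)

namespace IsGreedyChain

variable {S : Finset (Finset ℕ)} {t : ℕ → ℕ} {c : ℕ → Finset ℕ} {p : ℕ}

lemma lt_hlMin (h : IsGreedyChain S t c p) {k : ℕ} (hk : k < p) : t k < hlMin (c (k + 1)) := by
  by_contra! hle
  have := le_reach (h.mem (k + 1)) hle
  rw [h.hlMax_eq, ← h.succ_eq_reach] at this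
  exact (h.lt_succ k hk).not_ge this

lemma hlMax_lt_hlMax (h : IsGreedyChain S t c p) {i j : ℕ} (hij : i < j) (hj : j ≤ p) :
    hlMax (c i) < hlMax (c j) := by
  rw [h.hlMax_eq, h.hlMax_eq]
  exact (h.lt_succ i (by omega)).trans_le (h.monotone (by omega))

lemma crossingHL (h : IsGreedyChain S t c p) (hne : ∀ ℓ ∈ S, ℓ.Nonempty) {k : ℕ} (hk : k < p) :
    CrossingHL (c k) (c (k + 1)) := by
  refine crossingHL_of_lt (hne _ (h.mem k)) (hne _ (h.mem (k + 1)))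
    ((h.hlMin_le k).trans_lt (h.lt_hlMin hk)) ?_ (h.hlMax_lt_hlMax k.lt_succ_self hk)
  rw [h.hlMax_eq]
  exact h.hlMin_le (k + 1)

lemma inter_eq_empty (h : IsGreedyChain S t c p) {i j : ℕ} (hij : i + 2 ≤ j) (hj : j ≤ p) :
    hlInterval (c i) ∩ hlInterval (c j) = ∅ := by
  refine hlInterval_inter_eq_empty ?_
  obtain ⟨k, rfl⟩ : ∃ k, j = k + 1 := ⟨j - 1, by omega⟩
  rw [h.hlMax_eq]
  exact (h.monotone (by omega : i + 1 ≤ k)).trans_lt (h.lt_hlMin (by omega))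

lemma isFestoon (h : IsGreedyChain S t c p) (hne : ∀ ℓ ∈ S, ℓ.Nonempty) :
    IsFestoon ((Finset.range (p + 1)).image c) := by
  refine isFestoon_image_range ?_ (fun i hi => h.crossingHL hne (by omega))
    (fun i j hij hj => h.inter_eq_empty hij (by omega))
  intro i hi j hj hcij
  by_contra hij
  rcases Nat.lt_or_gt_of_ne hij with hlt | hlt
  · exact (h.hlMax_lt_hlMax hlt (Nat.lt_succ_iff.1 hj)).ne (by rw [hcij])
  · exact (h.hlMax_lt_hlMax hlt (Nat.lt_succ_iff.1 hi)).ne (by rw [hcij])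

lemma festoonInterval_eq (h : IsGreedyChain S t c p) (hne : ∀ ℓ ∈ S, ℓ.Nonempty)
    (hmin : ∀ ℓ ∈ S, t 0 ≤ hlMin ℓ) :
    festoonInterval ((Finset.range (p + 1)).image c) = Set.Icc (t 0) (t (p + 1)) := by
  refine (festoonInterval_subset_iff.2 ?_).antisymm ?_
  · simp only [Finset.mem_image, Finset.mem_range, forall_exists_index, and_imp]
    rintro _ k hk rfl
    rw [hlInterval_eq_Icc (hne _ (h.mem k)), h.hlMax_eq]
    exact Set.Icc_subset_Icc (hmin _ (h.mem k)) (h.monotone (by omega))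
  · have hmin0 : hlMin (c 0) = t 0 := (h.hlMin_le 0).antisymm (hmin _ (h.mem 0))
    refine Icc_subset_festoonInterval (Finset.mem_image_of_mem c (Finset.mem_range.2 p.succ_pos))
      (hmin0 ▸ hlMin_mem (hne _ (h.mem 0)))
      (Finset.mem_image_of_mem c (Finset.mem_range.2 p.lt_succ_self)) ?_
    rw [← h.hlMax_eq]
    exact hlMax_mem (hne _ (h.mem p))

lemma subset_Icc_or_subset_Ioi (h : IsGreedyChain S t c p) (hmin : ∀ ℓ ∈ S, t 0 ≤ hlMin ℓ)
    {ℓ : Finset ℕ} (hℓ : ℓ ∈ S) (hℓne : ℓ.Nonempty) :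
    hlInterval ℓ ⊆ Set.Icc (t 0) (t (p + 1)) ∨ hlInterval ℓ ⊆ Set.Ioi (t (p + 1)) := by
  rw [hlInterval_eq_Icc hℓne]
  rcases le_or_gt (hlMin ℓ) (t (p + 1)) with hle | hlt
  · have hmax : hlMax ℓ ≤ t (p + 1) := by
      rw [← h.stable, h.succ_eq_reach]
      exact le_reach hℓ hle
    exact Or.inl (Set.Icc_subset_Icc (hmin ℓ hℓ) hmax)
  · exact Or.inr fun x hx => hlt.trans_le hx.1

end IsGreedyChain

lemma exists_isGreedyChain {S : Finset (Finset ℕ)} {ℓ : Finset ℕ} (hℓ : ℓ ∈ S)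
    (hℓne : ℓ.Nonempty) : ∃ t c p, IsGreedyChain S t c p ∧ t 0 = hlMin ℓ := by
  set t : ℕ → ℕ := fun k => (reach S)^[k] (hlMin ℓ)
  have hsucc : ∀ k, t (k + 1) = reach S (t k) := fun k => Function.iterate_succ_apply' _ _ _
  have hmono : Monotone t := (reach_mono S).monotone_iterate_of_le_map
    ((hlMin_le_hlMax hℓne).trans (le_reach hℓ le_rfl))
  have hlink : ∀ k, ∃ ℓ' ∈ S, hlMin ℓ' ≤ t k ∧ hlMax ℓ' = t (k + 1) := fun k => by
    rw [hsucc]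
    exact exists_hlMax_eq_reach hℓ (hmono k.zero_le)
  choose c hcS hcmin hcmax using hlink
  have hmono' : Monotone fun k => t (k + 1) := fun _ _ h => hmono (Nat.succ_le_succ h)
  have hstab : ∃ p, t (p + 2) = t (p + 1) :=
    hmono'.exists_apply_succ_eq_of_le fun k => (hsucc k).trans_le (reach_le_sup S _)
  refine ⟨t, c, Nat.find hstab, ⟨hsucc, hmono, hcS, hcmin, hcmax, fun k hk => ?_,
    Nat.find_spec hstab⟩, rfl⟩
  exact (hmono (k + 1).le_succ).lt_of_ne (Ne.symm (Nat.find_min hstab hk))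

lemma exists_festoon_separating {S : Finset (Finset ℕ)} (hne : ∀ ℓ ∈ S, ℓ.Nonempty)
    (hS : S.Nonempty) :
    ∃ X ⊆ S, X.Nonempty ∧ IsFestoon X ∧ ∃ a b, festoonInterval X = Set.Icc a b ∧
      ∀ ℓ ∈ S, hlInterval ℓ ⊆ Set.Icc a b ∨ hlInterval ℓ ⊆ Set.Ioi b := by
  obtain ⟨ℓ, hℓ, hmin⟩ := S.exists_min_image hlMin hS
  obtain ⟨t, c, p, h, ht0⟩ := exists_isGreedyChain hℓ (hne ℓ hℓ)
  rw [← ht0] at hmin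
  refine ⟨_, ?_, ⟨c 0, Finset.mem_image_of_mem c (Finset.mem_range.2 p.succ_pos)⟩,
    h.isFestoon hne, t 0, t (p + 1), h.festoonInterval_eq hne hmin,
    fun ℓ hℓ => h.subset_Icc_or_subset_Ioi hmin hℓ (hne ℓ hℓ)⟩
  simp only [Finset.image_subset_iff]
  exact fun k _ => h.mem k

def IsLaminarOn {ι α : Type*} (f : ι → Set α) (s : Finset ι) : Prop :=
  ∀ i ∈ s, ∀ j ∈ s, f i ⊆ f j ∨ f j ⊆ f i ∨ f i ∩ f j = ∅

lemma IsLaminarOn.insert {ι α : Type*} [DecidableEq ι] {f : ι → Set α} {s : Finset ι}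
    (hs : IsLaminarOn f s) {x : ι} (hx : ∀ i ∈ s, f i ⊆ f x ∨ f i ∩ f x = ∅) :
    IsLaminarOn f (insert x s) := by
  have hx' : ∀ i ∈ s, f x ⊆ f i ∨ f i ⊆ f x ∨ f x ∩ f i = ∅ := fun i hi => by
    rw [Set.inter_comm]
    exact (hx i hi).elim (Or.inr ∘ Or.inl) (Or.inr ∘ Or.inr)
  simp only [IsLaminarOn, Finset.forall_mem_insert, subset_refl, true_or, true_and]
  refine ⟨hx', fun i hi => ⟨?_, hs i hi⟩⟩
  rcases hx' i hi with h | h | h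
  · exact Or.inr (Or.inl h)
  · exact Or.inl h
  · rw [Set.inter_comm] at h
    exact Or.inr (Or.inr h)

lemma existsUnique_mem_insert {α : Type*} [DecidableEq α] {S X : Finset α}
    {𝒳 : Finset (Finset α)} (h𝒳 : ∀ Y ∈ 𝒳, Y ⊆ S \ X)
    (huniq : ∀ a ∈ S \ X, ∃! Y, Y ∈ 𝒳 ∧ a ∈ Y) {a : α} (ha : a ∈ S) :
    ∃! Y, Y ∈ insert X 𝒳 ∧ a ∈ Y := by
  by_cases haX : a ∈ X
  · refine ⟨X, ⟨Finset.mem_insert_self X 𝒳, haX⟩, ?_⟩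
    rintro Y ⟨hY, haY⟩
    rcases Finset.mem_insert.1 hY with rfl | hY
    · rfl
    · exact absurd haX (Finset.mem_sdiff.1 (h𝒳 Y hY haY)).2
  · obtain ⟨Y, ⟨hY, haY⟩, hYuniq⟩ := huniq a (Finset.mem_sdiff.2 ⟨ha, haX⟩)
    refine ⟨Y, ⟨Finset.mem_insert_of_mem hY, haY⟩, ?_⟩
    rintro Z ⟨hZ, haZ⟩
    rcases Finset.mem_insert.1 hZ with rfl | hZ
    · exact absurd haZ haX
    · exact hYuniq Z ⟨hZ, haZ⟩

theorem exists_laminar_festoon_partition (S : Finset (Finset ℕ)) (hne : ∀ ℓ ∈ S, ℓ.Nonempty) :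
    ∃ 𝒳 : Finset (Finset (Finset ℕ)), (∀ X ∈ 𝒳, X ⊆ S ∧ IsFestoon X) ∧
      (∀ ℓ ∈ S, ∃! X, X ∈ 𝒳 ∧ ℓ ∈ X) ∧ IsLaminarOn festoonInterval 𝒳 := by
  induction S using Finset.strongInduction with
  | H S ih =>
  rcases S.eq_empty_or_nonempty with rfl | hS
  · exact ⟨∅, by simp, by simp, by simp [IsLaminarOn]⟩
  obtain ⟨X, hXS, hXne, hX, a, b, hXab, hside⟩ := exists_festoon_separating hne hS
  obtain ⟨𝒳, h𝒳, huniq, hlam⟩ := ih (S \ X) (Finset.sdiff_ssubset hXS hXne)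
    fun ℓ hℓ => hne ℓ (Finset.sdiff_subset hℓ)
  refine ⟨insert X 𝒳, ?_, fun ℓ => existsUnique_mem_insert (fun Y hY => (h𝒳 Y hY).1) huniq,
    hlam.insert fun Y hY => ?_⟩
  · simp only [Finset.forall_mem_insert]
    exact ⟨⟨hXS, hX⟩, fun Y hY => ⟨(h𝒳 Y hY).1.trans Finset.sdiff_subset, (h𝒳 Y hY).2⟩⟩
  · obtain ⟨hYS, hY⟩ := h𝒳 Y hY
    have hdisj : Disjoint (Set.Icc a b) (Set.Ioi b) :=
      (Set.Iic_disjoint_Ioi le_rfl).mono_left Set.Icc_subset_Iic_self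
    rw [hXab, ← Set.disjoint_iff_inter_eq_empty]
    exact (hY.festoonInterval_subset_or_subset hdisj
      fun ℓ hℓ => hside ℓ (Finset.sdiff_subset (hYS hℓ))).imp id hdisj.symm.mono_left

theorem stmt9_general (n : ℕ) (S : Finset (Finset ℕ))
    (hS : ∀ ℓ ∈ S, ℓ ⊆ Finset.range n ∧ 2 ≤ ℓ.card) :
    ∃ 𝒳 : Finset (Finset (Finset ℕ)),
      (∀ X ∈ 𝒳, X ⊆ S ∧ IsFestoon X) ∧
      (∀ ℓ ∈ S, ∃! X : Finset (Finset ℕ), X ∈ 𝒳 ∧ ℓ ∈ X) ∧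
      ∀ X ∈ 𝒳, ∀ Y ∈ 𝒳,
        festoonInterval X ⊆ festoonInterval Y ∨ festoonInterval Y ⊆ festoonInterval X ∨
          festoonInterval X ∩ festoonInterval Y = ∅ :=
  exists_laminar_festoon_partition S fun ℓ hℓ =>
    Finset.card_pos.1 (zero_lt_two.trans_le (hS ℓ hℓ).2)

/-- Every finite set of hyper-links can be partitioned into festoons whose festoon
intervals form a laminar family. -/
theorem stmt9 (n : ℕ) (hn : 3 ≤ n) (S : Finset (Finset ℕ))
    (hS : ∀ ℓ ∈ S, ℓ ⊆ Finset.range n ∧ 2 ≤ ℓ.card) :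
    ∃ 𝒳 : Finset (Finset (Finset ℕ)),
      (∀ X ∈ 𝒳, X ⊆ S ∧ IsFestoon X) ∧
      (∀ ℓ ∈ S, ∃! X : Finset (Finset ℕ), X ∈ 𝒳 ∧ ℓ ∈ X) ∧
      ∀ X ∈ 𝒳, ∀ Y ∈ 𝒳,
        festoonInterval X ⊆ festoonInterval Y ∨ festoonInterval Y ⊆ festoonInterval X ∨
          festoonInterval X ∩ festoonInterval Y = ∅ :=
  stmt9_general n S hS
end

section
/- Let F be a feasible R-special directed solution, and for each v ∈ R let I_v denote the v-bad interval. Then the family of all v-bad intervals {I_v : v ∈ R} is laminar. -/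
theorem Relation.ReflTransGen.exists_entering_step {α : Type*} {r : α → α → Prop} {a b : α}
    {I : Set α} (h : Relation.ReflTransGen r a b) (ha : a ∉ I) (hb : b ∈ I) :
    ∃ x y, r x y ∧ x ∉ I ∧ y ∈ I ∧ Relation.ReflTransGen r a x ∧ Relation.ReflTransGen r y b := by
  induction h using Relation.ReflTransGen.head_induction_on with
  | refl => exact absurd hb ha
  | @head a c hac hcb ih =>
    by_cases hc : c ∈ I
    · exact ⟨a, c, hac, ha, hc, .refl, hcb⟩
    · obtain ⟨x, y, hxy, hx, hy, hcx, hyb⟩ := ih hc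
      exact ⟨x, y, hxy, hx, hy, .head hac hcx, hyb⟩

section RSpecial

variable {R : Finset ℕ} {F : Finset (ℕ × ℕ)}

theorem RSpecial.tail_unique (hF : RSpecial R F) {a b c : ℕ} (ha : (a, c) ∈ F)
    (hb : (b, c) ∈ F) : a = b := by
  obtain ⟨hmem, hroot, hparent, -⟩ := hF
  obtain ⟨f, -, huniq⟩ := hparent c (hmem _ ha).2.2 (hroot _ ha)
  exact congrArg Prod.fst ((huniq _ ⟨ha, rfl⟩).trans (huniq _ ⟨hb, rfl⟩).symm)

theorem RSpecial.reach_or_reach (hF : RSpecial R F) {x y t : ℕ} (hx : Reach F x t)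
    (hy : Reach F y t) : Reach F x y ∨ Reach F y x := by
  induction hx with
  | refl => exact Or.inr hy
  | tail hxb hbc ih =>
    rcases Relation.ReflTransGen.cases_tail hy with rfl | ⟨d, hyd, hdc⟩
    · exact Or.inl (hxb.tail hbc)
    · exact ih (hF.tail_unique hdc hbc ▸ hyd)

theorem RSpecial.not_transGen_self (hF : RSpecial R F) {x : ℕ} (hx : Reach F 0 x) :
    ¬Relation.TransGen (fun a b => (a, b) ∈ F) x x := by
  induction hx with
  | refl =>
    intro h
    obtain ⟨d, -, hd⟩ := Relation.TransGen.tail'_iff.mp h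
    exact hF.2.1 _ hd rfl
  | tail _ hbc ih =>
    intro h
    obtain ⟨d, hcd, hdc⟩ := Relation.TransGen.tail'_iff.mp h
    exact ih (.head' hbc (hF.tail_unique hdc hbc ▸ hcd))

/-- Any other tail would either cross `(u, v)` or leave `u` in the same direction as `(u, v)`. -/
theorem RSpecial.eq_snd_of_enters_Ioo (hF : RSpecial R F) {u v x y : ℕ} (huv : (u, v) ∈ F)
    (hxy : (x, y) ∈ F) (hy : y ∈ Set.Ioo (min u v) (max u v))
    (hx : x ∉ Set.Ioo (min u v) (max u v)) : x = v := by
  obtain ⟨-, -, -, -, hcross, hdir⟩ := hF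
  simp only [Set.mem_Ioo, not_and_or, not_lt] at hx hy
  have hne : (x, y) ≠ (u, v) := by
    rintro ⟨⟩
    omega
  by_contra hxv
  rcases eq_or_ne x u with rfl | hxu
  · exact hdir _ hxy _ huv hne rfl (by omega)
  · exact hcross _ hxy _ huv hne (by unfold Crosses; omega)

theorem RSpecial.exists_lower_common_ancestor (hF : RSpecial R F) {p q c : ℕ} (hp : p ∈ R)
    (hq : q ∈ R) (hpq : p < q) (hgap : ∀ t ∈ R, t ≤ p ∨ q ≤ t) (hnpq : ¬Reach F p q)
    (hnqp : ¬Reach F q p) (hcp : c ≤ p) (hcq : Reach F c q) :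
    ∃ d ∈ R, d ≤ p ∧ Reach F d p ∧ Reach F d q ∧ Reach F c d ∧ ¬Reach F d c := by
  have hmem := hF.1
  have hroot := hF.2.2.2.1
  obtain ⟨x₁, y₁, h₁, hx₁, hy₁, hcx₁, hy₁q⟩ :=
    Relation.ReflTransGen.exists_entering_step (I := Set.Ici q) hcq (by simp; omega) (by simp)
  simp only [Set.mem_Ici, not_le] at hx₁ hy₁
  have hx₁p : x₁ < p := by
    have hx₁q : Reach F x₁ q := .head h₁ hy₁q
    rcases hgap x₁ (hmem _ h₁).2.1 with h | h
    · exact lt_of_le_of_ne h (by rintro rfl; exact hnpq hx₁q)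
    · omega
  obtain ⟨x, z, hxz, hx, hz, -, hzp⟩ :=
    Relation.ReflTransGen.exists_entering_step (I := Set.Ioo (min x₁ y₁) (max x₁ y₁))
      (hroot p hp) (by simp) (by simp; omega)
  obtain rfl := (hF.eq_snd_of_enters_Ioo h₁ hxz hz hx).symm
  have hy₁p : Reach F y₁ p := .head hxz hzp
  obtain ⟨x₂, y₂, h₂, hx₂, hy₂, hy₁x₂, hy₂p⟩ :=
    Relation.ReflTransGen.exists_entering_step (I := Set.Iic p) hy₁p (by simp; omega) (by simp)
  simp only [Set.mem_Iic, not_le] at hx₂ hy₂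
  have hy₂R : y₂ ∈ R := (hmem _ h₂).2.2
  have hqx₂ : q < x₂ := by
    rcases hgap x₂ (hmem _ h₂).2.1 with h | h
    · omega
    · exact lt_of_le_of_ne h (by rintro rfl; exact hnqp (.head h₂ hy₂p))
  obtain ⟨x', z', hxz', hx', hz', -, hz'q⟩ :=
    Relation.ReflTransGen.exists_entering_step (I := Set.Ioo (min x₂ y₂) (max x₂ y₂))
      (hroot q hq) (by simp) (by simp; omega)
  obtain rfl := (hF.eq_snd_of_enters_Ioo h₂ hxz' hz' hx').symm
  have hdq : Reach F y₂ q := .head hxz' hz'q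
  have hdc : ¬Reach F y₂ c := fun h =>
    hF.not_transGen_self (hroot _ hy₂R) (.trans_left (.tail' (h.trans hcx₁) h₁) (hy₁x₂.tail h₂))
  exact ⟨y₂, hy₂R, hy₂, hy₂p, hdq, (hF.reach_or_reach hcq hdq).resolve_right hdc, hdc⟩

theorem RSpecial.reach_or_reach_of_consecutive (hF : RSpecial R F) (hr : 0 ∈ R) {p q : ℕ}
    (hp : p ∈ R) (hq : q ∈ R) (hpq : p < q) (hgap : ∀ t ∈ R, t ≤ p ∨ q ≤ t) :
    Reach F p q ∨ Reach F q p := by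
  classical
  by_contra! ⟨hnpq, hnqp⟩
  let desc (c : ℕ) : Finset ℕ := R.filter (Reach F c ·)
  let S := R.filter fun c => c ≤ p ∧ Reach F c p ∧ Reach F c q
  obtain ⟨c, hcS, hmin⟩ := S.exists_min_image (fun c => (desc c).card)
    ⟨0, Finset.mem_filter.mpr ⟨hr, p.zero_le, hF.2.2.2.1 p hp, hF.2.2.2.1 q hq⟩⟩
  obtain ⟨hcR, hcp, hcrp, hcq⟩ := Finset.mem_filter.mp hcS
  obtain ⟨d, hdR, hdp, hdrp, hdq, hcd, hdc⟩ :=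
    hF.exists_lower_common_ancestor hp hq hpq hgap hnpq hnqp hcp hcq
  have hsub : desc d ⊂ desc c := by
    refine Finset.ssubset_iff_of_subset (fun t ht => ?_) |>.mpr ⟨c, ?_, ?_⟩
    · obtain ⟨htR, hdt⟩ := Finset.mem_filter.mp ht
      exact Finset.mem_filter.mpr ⟨htR, hcd.trans hdt⟩
    · exact Finset.mem_filter.mpr ⟨hcR, .refl⟩
    · exact fun h => hdc (Finset.mem_filter.mp h).2
  exact (Finset.card_lt_card hsub).not_ge (hmin d (Finset.mem_filter.mpr ⟨hdR, hdp, hdrp, hdq⟩))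

end RSpecial

section IsBadInterval

variable {n : ℕ} {R : Finset ℕ} {F : Finset (ℕ × ℕ)} {v a b : ℕ}

theorem IsBadInterval.exists_not_reach (h : IsBadInterval n R F v a b) {a' b' : ℕ}
    (ha : a' ≤ a) (hb : b ≤ b') (hb' : b' ≤ n - 1) (hne : a' ≠ a ∨ b' ≠ b) :
    ∃ w ∈ R, a' ≤ w ∧ w ≤ b' ∧ ¬Reach F v w := by
  by_contra! hall
  have := h.2.2.2.2 a' b' ha hb hb' hall
  tauto

theorem IsBadInterval.succ_mem (h : IsBadInterval n R F v a b) (hb : b < n - 1) :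
    b + 1 ∈ R ∧ ¬Reach F v (b + 1) := by
  obtain ⟨w, hw, haw, hwb, hvw⟩ := h.exists_not_reach le_rfl b.le_succ hb (Or.inr b.succ_ne_self)
  obtain rfl : w = b + 1 := by
    by_contra hne
    exact hvw (h.2.2.2.1 w hw haw (by omega))
  exact ⟨hw, hvw⟩

theorem IsBadInterval.pred_mem (h : IsBadInterval n R F v a b) (ha : 0 < a) :
    a - 1 ∈ R ∧ ¬Reach F v (a - 1) := by
  obtain ⟨w, hw, haw, hwb, hvw⟩ :=
    h.exists_not_reach (a.sub_le 1) le_rfl h.2.2.1 (Or.inl (by omega))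
  obtain rfl : w = a - 1 := by
    by_contra hne
    exact hvw (h.2.2.2.1 w hw (by omega) hwb)
  exact ⟨hw, hvw⟩

theorem RSpecial.not_isBadInterval_crossing (hF : RSpecial R F) (hr : 0 ∈ R) {w a' b' : ℕ}
    (hv : IsBadInterval n R F v a b) (hw : IsBadInterval n R F w a' b') (haa' : a < a')
    (ha'b : a' ≤ b) (hbb' : b < b') : False := by
  obtain ⟨hq, hvq⟩ := hv.succ_mem (by have := hw.2.2.1; omega)
  obtain ⟨hp, hwp⟩ := hw.pred_mem (by omega)
  have hvp : Reach F v (a' - 1) := hv.2.2.2.1 _ hp (by omega) (by omega)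
  have hwq : Reach F w (b + 1) := hw.2.2.2.1 _ hq (by omega) (by omega)
  have hgap : ∀ t ∈ R, t ≤ a' - 1 ∨ b + 1 ≤ t := by
    intro t ht
    by_contra! hmid
    rcases hF.reach_or_reach (hv.2.2.2.1 t ht (by omega) (by omega))
        (hw.2.2.2.1 t ht (by omega) (by omega)) with hvw | hwv
    · exact hvq (hvw.trans hwq)
    · exact hwp (hwv.trans hvp)
  rcases hF.reach_or_reach_of_consecutive hr hp hq (by omega) hgap with h | h
  · exact hvq (hvp.trans h)
  · exact hwp (hwq.trans h)

end IsBadInterval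

theorem stmt10_general (n : ℕ) (R : Finset ℕ) (hr : 0 ∈ R)
    (F : Finset (ℕ × ℕ)) (hsp : RSpecial R F) :
    ∀ v ∈ R, ∀ w ∈ R, ∀ a b a' b' : ℕ,
      IsBadInterval n R F v a b → IsBadInterval n R F w a' b' →
      (Set.Icc a b ⊆ Set.Icc a' b' ∨ Set.Icc a' b' ⊆ Set.Icc a b ∨
        Set.Icc a b ∩ Set.Icc a' b' = ∅) := by
  intro v _ w _ a b a' b' hv hw
  have disjoint (h : b < a' ∨ b' < a) : Set.Icc a b ∩ Set.Icc a' b' = ∅ :=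
    Set.eq_empty_of_forall_notMem fun x hx => by
      simp only [Set.mem_inter_iff, Set.mem_Icc] at hx
      omega
  rcases le_or_gt a' a with ha | ha
  · rcases le_or_gt b b' with hb | hb
    · exact Or.inl (Set.Icc_subset_Icc ha hb)
    rcases ha.eq_or_lt with rfl | ha
    · exact Or.inr (Or.inl (Set.Icc_subset_Icc le_rfl hb.le))
    rcases lt_or_ge b' a with hd | hd
    · exact Or.inr (Or.inr (disjoint (Or.inr hd)))
    · exact (hsp.not_isBadInterval_crossing hr hw hv ha hd hb).elim
  · rcases le_or_gt b' b with hb | hb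
    · exact Or.inr (Or.inl (Set.Icc_subset_Icc ha.le hb))
    rcases lt_or_ge b a' with hd | hd
    · exact Or.inr (Or.inr (disjoint (Or.inl hd)))
    · exact (hsp.not_isBadInterval_crossing hr hv hw ha hd hb).elim

/-- For a feasible `R`-special directed solution, the family of `v`-bad intervals
`{I_v : v ∈ R}` is laminar. -/
theorem stmt10 (n : ℕ) (hn : 3 ≤ n) (R : Finset ℕ) (hR : R ⊆ Finset.range n) (hr : 0 ∈ R)
    (F : Finset (ℕ × ℕ)) (hsp : RSpecial R F) (hfeas : FeasibleDir n R F) :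
    ∀ v ∈ R, ∀ w ∈ R, ∀ a b a' b' : ℕ,
      IsBadInterval n R F v a b → IsBadInterval n R F w a' b' →
      (Set.Icc a b ⊆ Set.Icc a' b' ∨ Set.Icc a' b' ⊆ Set.Icc a b ∨
        Set.Icc a b ∩ Set.Icc a' b' = ∅) :=
  stmt10_general n R hr F hsp
end

section
/- (Cycle Merging Lemma) Let c be a shortening-monotone nonnegative cost function on directed links. Let S, A ⊆ V(H) with |S| ≥ 2, |A| ≥ 2, r = 0 ∈ S, and suppose S and A are intersecting as hyper-links. If F_S is a directed cycle on S and F_A is a directed cycle on A, then there exists a directed cycle F_{S∪A} on S ∪ A whose cost is at most c(F_S) + c(F_A). -/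
/-- `(s,t)` is a shortening of `(u,v)`: `t = v`, `s ≠ v`, and `min(u,v) ≤ s ≤ max(u,v)`. -/
def Shortening (f g : ℕ × ℕ) : Prop :=
  f.2 = g.2 ∧ f.1 ≠ g.2 ∧ min g.1 g.2 ≤ f.1 ∧ f.1 ≤ max g.1 g.2

/-- The link multiset of a cyclic sequence `t₁, …, t_k`:
`(t₁,t₂), …, (t_{k-1},t_k), (t_k,t₁)`. -/
def cycleLinks (l : List ℕ) : List (ℕ × ℕ) := l.zip (l.rotate 1)

/-- `l` is a directed cycle on `T`: a cyclic sequence of length at least 2 of vertices of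
`V(H)`, with consecutive entries (cyclically) distinct, whose set of entries is exactly `T`. -/
def IsDirCycleOn (n : ℕ) (T : Finset ℕ) (l : List ℕ) : Prop :=
  2 ≤ l.length ∧ (∀ x ∈ l, x < n) ∧ (∀ p ∈ cycleLinks l, p.1 ≠ p.2) ∧
    ∀ x : ℕ, x ∈ l ↔ x ∈ T

/-- The cost of a directed cycle: the sum of the costs of its links, with multiplicity. -/
def cycleCost (c : ℕ × ℕ → ℝ) (l : List ℕ) : ℝ := ((cycleLinks l).map c).sum

/-!
Both cases are an exchange of heads: if `(a, b)` is a link of `F_S` and `(u, v)` a link of `F_A`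
with `a ≠ v` and `u ≠ b`, replacing these two links by `(a, v)` and `(u, b)` splices the two
cycles into one cycle on `S ∪ A`, which is cheap enough as soon as
`c (a, v) + c (u, b) ≤ c (a, b) + c (u, v)`.
If `S` and `A` share a vertex `w`, take any links `(a, w)` and `(u, w)`; nothing changes.
Otherwise some vertex of `S` lies strictly between `m = min A` and `M = max A` while the root `0`
does not, so `F_S` has a link `(a, b)` leaving the interval `(m, M)`; and `F_A`, which visits
both `m` and `M`, has a link `(u, v)` from the side of `a` where `b` lies to the other side.
Then `(a, v)` is a shortening of `(u, v)` and `(u, b)` one of `(a, b)`.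
-/

section Walks

variable {α : Type*}

/-- The links of the walk `l ++ [e]`. -/
def walkLinks (l : List α) (e : α) : List (α × α) := l.zip (l.tail ++ [e])

theorem walkLinks_cons_cons (a b : α) (t : List α) (e : α) :
    walkLinks (a :: b :: t) e = (a, b) :: walkLinks (b :: t) e := rfl

theorem walkLinks_append_cons (l₁ : List α) (b : α) (l₂ : List α) (e : α) :
    walkLinks (l₁ ++ b :: l₂) e = walkLinks l₁ b ++ walkLinks (b :: l₂) e := by
  cases l₁ with
  | nil => rfl
  | cons x l₁ =>
    have hsplit : l₁ ++ b :: l₂ ++ [e] = (l₁ ++ [b]) ++ (l₂ ++ [e]) := by simp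
    simp only [walkLinks, List.tail_cons, List.cons_append]
    rw [hsplit, ← List.cons_append, List.zip_append (by simp)]

theorem exists_mem_walkLinks_leaving (P : α → Prop) (t : List α) (x e : α) (hx : P x)
    (ht : ∃ y ∈ t, ¬ P y) : ∃ p ∈ walkLinks (x :: t) e, P p.1 ∧ ¬ P p.2 := by
  induction t generalizing x with
  | nil => simp at ht
  | cons z t ih =>
    by_cases hz : P z
    · obtain ⟨y, hy, hPy⟩ := ht
      have hyt : y ∈ t := (List.mem_cons.1 hy).resolve_left (by rintro rfl; exact hPy hz)
      obtain ⟨p, hp, hPp⟩ := ih z hz ⟨y, hyt, hPy⟩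
      exact ⟨p, List.mem_cons_of_mem _ hp, hPp⟩
    · exact ⟨(x, z), List.mem_cons_self, hx, hz⟩

end Walks

section Cycles

variable {n : ℕ} {T : Finset ℕ} {l : List ℕ}

theorem cycleLinks_cons (h : ℕ) (t : List ℕ) : cycleLinks (h :: t) = walkLinks (h :: t) h := by
  simp [cycleLinks, walkLinks]

theorem cycleLinks_rotate (l : List ℕ) (k : ℕ) :
    cycleLinks (l.rotate k) = (cycleLinks l).rotate k := by
  rw [cycleLinks, cycleLinks, List.zip, List.zipWith_rotate_distrib _ _ _ _ (by simp),
    List.rotate_rotate, List.rotate_rotate, Nat.add_comm]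

theorem mem_of_mem_cycleLinks {p : ℕ × ℕ} (hp : p ∈ cycleLinks l) : p.1 ∈ l ∧ p.2 ∈ l :=
  ⟨(List.of_mem_zip hp).1, List.mem_rotate.1 (List.of_mem_zip hp).2⟩

theorem cycleCost_rotate (c : ℕ × ℕ → ℝ) (l : List ℕ) (k : ℕ) :
    cycleCost c (l.rotate k) = cycleCost c l := by
  rw [cycleCost, cycleCost, cycleLinks_rotate]
  exact ((List.rotate_perm _ k).map c).sum_eq

theorem IsDirCycleOn.rotate (hl : IsDirCycleOn n T l) (k : ℕ) : IsDirCycleOn n T (l.rotate k) :=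
  ⟨by simpa using hl.1, fun x hx => hl.2.1 x (List.mem_rotate.1 hx),
    fun p hp => hl.2.2.1 p (by rwa [cycleLinks_rotate, List.mem_rotate] at hp),
    fun x => List.mem_rotate.trans (hl.2.2.2 x)⟩

theorem exists_rotate_eq_cons {x : ℕ} (hx : x ∈ l) : ∃ k t, l.rotate k = x :: t := by
  obtain ⟨l₁, l₂, rfl⟩ := List.append_of_mem hx
  refine ⟨l₁.length, l₂ ++ l₁, ?_⟩
  rw [List.rotate_eq_drop_append_take (by simp), List.drop_left, List.take_left]
  rfl

theorem exists_rotate_eq_cons_cons {p : ℕ × ℕ} (hp : p ∈ cycleLinks l) (hl : 2 ≤ l.length) :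
    ∃ k t, l.rotate k = p.1 :: p.2 :: t := by
  obtain ⟨i, hi, rfl⟩ := List.mem_iff_getElem.1 hp
  have hhead : (cycleLinks (l.rotate i)).head? = some (cycleLinks l)[i] := by
    rw [cycleLinks_rotate, List.head?_rotate hi, List.getElem?_eq_getElem hi]
  obtain ⟨x, y, t, hxy⟩ : ∃ x y t, l.rotate i = x :: y :: t := by
    match h : l.rotate i with
    | x :: y :: t => exact ⟨x, y, t, rfl⟩
    | [] | [_] =>
      have hlen := congrArg List.length h
      simp only [List.length_rotate, List.length_nil, List.length_cons] at hlen
      omega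
  rw [hxy, cycleLinks_cons, walkLinks_cons_cons, List.head?_cons, Option.some_inj] at hhead
  exact ⟨i, t, by rw [hxy, ← hhead]⟩

theorem exists_mem_cycleLinks_leaving (P : ℕ → Prop) {x y : ℕ} (hx : x ∈ l) (hy : y ∈ l)
    (hPx : P x) (hPy : ¬ P y) : ∃ p ∈ cycleLinks l, P p.1 ∧ ¬ P p.2 := by
  obtain ⟨k, t, hk⟩ := exists_rotate_eq_cons hx
  have hyt : y ∈ t := by
    have hy' : y ∈ x :: t := hk ▸ List.mem_rotate.2 hy
    exact (List.mem_cons.1 hy').resolve_left (by rintro rfl; exact hPy hPx)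
  obtain ⟨p, hp, hPp⟩ := exists_mem_walkLinks_leaving P t x x hPx ⟨y, hyt, hPy⟩
  rw [← cycleLinks_cons, ← hk, cycleLinks_rotate, List.mem_rotate] at hp
  exact ⟨p, hp, hPp⟩

theorem IsDirCycleOn.exists_mem_cycleLinks_into (hl : IsDirCycleOn n T l) {w : ℕ}
    (hw : w ∈ T) : ∃ a, a ≠ w ∧ (a, w) ∈ cycleLinks l := by
  obtain ⟨z, hz, hzw⟩ : ∃ z ∈ l, z ≠ w := by
    obtain ⟨x, y, t, rfl⟩ : ∃ x y t, l = x :: y :: t := by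
      match l, hl.1 with
      | x :: y :: t, _ => exact ⟨x, y, t, rfl⟩
    have hxy : x ≠ y := hl.2.2.1 (x, y) (by simp [cycleLinks_cons, walkLinks])
    by_cases hxw : x = w
    · exact ⟨y, by simp, hxw ▸ hxy.symm⟩
    · exact ⟨x, by simp, hxw⟩
  obtain ⟨⟨a, b⟩, hab, ha, hb⟩ :=
    exists_mem_cycleLinks_leaving (· ≠ w) hz ((hl.2.2.2 w).2 hw) hzw (not_not.2 rfl)
  simp only [ne_eq, not_not] at ha hb
  subst hb
  exact ⟨a, ha, hab⟩

end Cycles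

section Splice

variable {n : ℕ} {S A : Finset ℕ}

theorem cycleLinks_splice (a b u v : ℕ) (tS tA : List ℕ) :
    cycleLinks (a :: v :: (tA ++ u :: b :: tS)) =
      (a, v) :: (walkLinks (v :: tA) u ++ (u, b) :: walkLinks (b :: tS) a) := by
  rw [cycleLinks_cons, walkLinks_cons_cons, ← List.cons_append, walkLinks_append_cons,
    walkLinks_cons_cons]

theorem cycleCost_splice (c : ℕ × ℕ → ℝ) (a b u v : ℕ) (tS tA : List ℕ) :
    cycleCost c (a :: v :: (tA ++ u :: b :: tS)) + (c (a, b) + c (u, v)) =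
      cycleCost c (a :: b :: tS) + cycleCost c (u :: v :: tA) + (c (a, v) + c (u, b)) := by
  rw [cycleCost, cycleLinks_splice, cycleCost, cycleLinks_cons, walkLinks_cons_cons, cycleCost,
    cycleLinks_cons, walkLinks_cons_cons]
  simp only [List.map_cons, List.map_append, List.sum_cons, List.sum_append]
  ring

theorem IsDirCycleOn.splice {a b u v : ℕ} {tS tA : List ℕ} (hS : IsDirCycleOn n S (a :: b :: tS))
    (hA : IsDirCycleOn n A (u :: v :: tA)) (hav : a ≠ v) (hub : u ≠ b) :
    IsDirCycleOn n (S ∪ A) (a :: v :: (tA ++ u :: b :: tS)) := by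
  have hmem : ∀ x, x ∈ a :: v :: (tA ++ u :: b :: tS) ↔
      x ∈ a :: b :: tS ∨ x ∈ u :: v :: tA := by
    intro x
    simp only [List.mem_cons, List.mem_append]
    tauto
  refine ⟨by simp, fun x hx => ?_, fun p hp => ?_, fun x => ?_⟩
  · rcases (hmem x).1 hx with h | h
    exacts [hS.2.1 x h, hA.2.1 x h]
  · rw [cycleLinks_splice] at hp
    have hSlinks := hS.2.2.1
    have hAlinks := hA.2.2.1
    rw [cycleLinks_cons, walkLinks_cons_cons] at hSlinks hAlinks
    simp only [List.mem_cons, List.mem_append] at hp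
    rcases hp with rfl | hp | rfl | hp
    exacts [hav, hAlinks p (List.mem_cons_of_mem _ hp), hub,
      hSlinks p (List.mem_cons_of_mem _ hp)]
  · rw [hmem, hS.2.2.2, hA.2.2.2, Finset.mem_union]

theorem exists_isDirCycleOn_union_of_exchange (c : ℕ × ℕ → ℝ) {a b u v : ℕ} {lS lA : List ℕ}
    (hS : IsDirCycleOn n S lS) (hA : IsDirCycleOn n A lA)
    (hab : (a, b) ∈ cycleLinks lS) (huv : (u, v) ∈ cycleLinks lA) (hav : a ≠ v) (hub : u ≠ b)
    (hcost : c (a, v) + c (u, b) ≤ c (a, b) + c (u, v)) :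
    ∃ l, IsDirCycleOn n (S ∪ A) l ∧ cycleCost c l ≤ cycleCost c lS + cycleCost c lA := by
  obtain ⟨kS, tS, hkS⟩ := exists_rotate_eq_cons_cons hab hS.1
  obtain ⟨kA, tA, hkA⟩ := exists_rotate_eq_cons_cons huv hA.1
  refine ⟨a :: v :: (tA ++ u :: b :: tS),
    (hkS ▸ hS.rotate kS).splice (hkA ▸ hA.rotate kA) hav hub, ?_⟩
  rw [← cycleCost_rotate c lS kS, ← cycleCost_rotate c lA kA, hkS, hkA]
  linarith [cycleCost_splice c a b u v tS tA]

end Splice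

theorem exists_shortening_exchange {S A : Finset ℕ} {lS lA : List ℕ}
    (hlS : ∀ z, z ∈ lS ↔ z ∈ S) (hlA : ∀ z, z ∈ lA ↔ z ∈ A) (hSA : Disjoint S A)
    (h0 : 0 ∈ S) {x y₁ y₂ : ℕ} (hx : x ∈ S) (hy₁ : y₁ ∈ A) (hy₂ : y₂ ∈ A)
    (h₁ : y₁ < x) (h₂ : x < y₂) :
    ∃ a b u v, (a, b) ∈ cycleLinks lS ∧ (u, v) ∈ cycleLinks lA ∧
      Shortening (a, v) (u, v) ∧ Shortening (u, b) (a, b) := by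
  have hne : ∀ s ∈ S, ∀ t ∈ A, s ≠ t := fun s hs t ht h =>
    Finset.disjoint_left.1 hSA hs (h ▸ ht)
  have hAne : A.Nonempty := ⟨y₁, hy₁⟩
  set m := A.min' hAne
  set M := A.max' hAne
  have hm : m ∈ A := A.min'_mem hAne
  have hM : M ∈ A := A.max'_mem hAne
  have hmx : m < x := (A.min'_le y₁ hy₁).trans_lt h₁
  have hxM : x < M := h₂.trans_le (A.le_max' y₂ hy₂)
  obtain ⟨⟨a, b⟩, hab, ha, hb⟩ := exists_mem_cycleLinks_leaving
    (fun z => m < z ∧ z < M) ((hlS x).2 hx) ((hlS 0).2 h0) ⟨hmx, hxM⟩ (by omega)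
  obtain ⟨hma, haM⟩ : m < a ∧ a < M := ha
  have haS : a ∈ S := (hlS a).1 (mem_of_mem_cycleLinks hab).1
  have hbS : b ∈ S := (hlS b).1 (mem_of_mem_cycleLinks hab).2
  have hbm := hne b hbS m hm
  have hbM := hne b hbS M hM
  obtain ⟨y, hy, y', hy', hPy, hPy'⟩ :
      ∃ y ∈ A, ∃ y' ∈ A, (y < a ↔ b < a) ∧ ¬ (y' < a ↔ b < a) := by
    rcases lt_or_ge b a with hba | hba
    · exact ⟨m, hm, M, hM, by omega⟩
    · exact ⟨M, hM, m, hm, by omega⟩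
  obtain ⟨⟨u, v⟩, huv, hu, hv⟩ := exists_mem_cycleLinks_leaving
    (fun z => z < a ↔ b < a) ((hlA y).2 hy) ((hlA y').2 hy') hPy hPy'
  simp only at hb hu hv
  have huA : u ∈ A := (hlA u).1 (mem_of_mem_cycleLinks huv).1
  have hvA : v ∈ A := (hlA v).1 (mem_of_mem_cycleLinks huv).2
  have hav := hne a haS v hvA
  have hub := hne b hbS u huA
  have hmu : m ≤ u := A.min'_le u huA
  have huM : u ≤ M := A.le_max' u huA
  refine ⟨a, b, u, v, hab, huv, ?_, ?_⟩ <;> simp only [Shortening, true_and] <;> omega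

theorem stmt11_general (n : ℕ) (c : ℕ × ℕ → ℝ)
    (hmono : ∀ f g : ℕ × ℕ, Shortening f g → c f ≤ c g)
    (S A : Finset ℕ) (hrS : 0 ∈ S)
    (hint : Intersecting S A)
    (lS lA : List ℕ) (hlS : IsDirCycleOn n S lS) (hlA : IsDirCycleOn n A lA) :
    ∃ l : List ℕ, IsDirCycleOn n (S ∪ A) l ∧
      cycleCost c l ≤ cycleCost c lS + cycleCost c lA := by
  by_cases hSA : Disjoint S A
  · obtain ⟨⟨x, hx, y₁, hy₁, y₂, hy₂, h₁, h₂⟩, -⟩ :=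
      hint.resolve_left (by rwa [Finset.not_nonempty_iff_eq_empty,
        ← Finset.disjoint_iff_inter_eq_empty])
    obtain ⟨a, b, u, v, hab, huv, hav, hub⟩ :=
      exists_shortening_exchange hlS.2.2.2 hlA.2.2.2 hSA hrS hx hy₁ hy₂ h₁ h₂
    exact exists_isDirCycleOn_union_of_exchange c hlS hlA hab huv hav.2.1 hub.2.1
      (by linarith [hmono _ _ hav, hmono _ _ hub])
  · obtain ⟨w, hwS, hwA⟩ := Finset.not_disjoint_iff.1 hSA
    obtain ⟨a, haw, ha⟩ := hlS.exists_mem_cycleLinks_into hwS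
    obtain ⟨u, huw, hu⟩ := hlA.exists_mem_cycleLinks_into hwA
    exact exists_isDirCycleOn_union_of_exchange c hlS hlA ha hu haw huw le_rfl

/-- Cycle Merging Lemma: if `F_S` is a directed cycle on `S ∋ r` and `F_A` a directed cycle
on `A`, with `S` and `A` intersecting as hyper-links, then there is a directed cycle on
`S ∪ A` of cost at most `c(F_S) + c(F_A)`. -/
theorem stmt11 (n : ℕ) (hn : 3 ≤ n) (c : ℕ × ℕ → ℝ)
    (hc0 : ∀ f : ℕ × ℕ, 0 ≤ c f)
    (hmono : ∀ f g : ℕ × ℕ, Shortening f g → c f ≤ c g)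
    (S A : Finset ℕ) (hS : ∀ x ∈ S, x < n) (hA : ∀ x ∈ A, x < n)
    (hS2 : 2 ≤ S.card) (hA2 : 2 ≤ A.card) (hrS : 0 ∈ S)
    (hint : Intersecting S A)
    (lS lA : List ℕ) (hlS : IsDirCycleOn n S lS) (hlA : IsDirCycleOn n A lA) :
    ∃ l : List ℕ, IsDirCycleOn n (S ∪ A) l ∧
      cycleCost c l ≤ cycleCost c lS + cycleCost c lA :=
  stmt11_general n c hmono S A hrS hint lS lA hlS hlA
end
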